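/- arXiv:2211.12984 — 4 statements merged into one kernel-verified Lean document; each statement's English description precedes it below -/
import Mathlib

section
/- Let Ω be an eventually outward finitely branched tree quiver, V a representation of Ω over a field 𝔽, and α a connected full subquiver. If e is an arrow contained in α with exactly one literal or virtual boundary arrow of α behind it, then the map f_e restricted to the subrepresentation F^α is surjective from F^α_{s(e)} onto F^α_{t(e)}. -/
attribute [local instance] Classical.propDecidable

/-- A quiver in the sense of the paper: a set of vertices, a set of arrows,
and source and target functions. -/
structure Qvr where
  V : Type
  A : Type
  s : A → V
  t : A → V

namespace Qvr

variable (Ω : Qvr)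

/-- The underlying (simple) graph of a quiver: `i` and `j` are adjacent iff they are joined
by some arrow. -/
def graph : SimpleGraph Ω.V where
  Adj i j := i ≠ j ∧ ∃ a, (Ω.s a = i ∧ Ω.t a = j) ∨ (Ω.s a = j ∧ Ω.t a = i)
  symm := by
    constructor
    rintro i j ⟨h1, a, h2⟩
    exact ⟨h1.symm, a, h2.symm⟩
  loopless := by
    constructor
    rintro i ⟨h1, -⟩
    exact h1 rfl

/-- The quiver "has an underlying graph": no arrow is a loop, and each pair of vertices is
joined by at most one arrow. -/
def Simple : Prop :=
  (∀ a, Ω.s a ≠ Ω.t a) ∧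
    ∀ a b, ({Ω.s a, Ω.t a} : Set Ω.V) = {Ω.s b, Ω.t b} → a = b

/-- A vertex `i` is *behind* the arrow `e` if it lies in the connected component of `s e`
after the (edge of the) arrow `e` is removed from the underlying graph. -/
def Behind (e : Ω.A) (i : Ω.V) : Prop :=
  ((Ω.graph.deleteEdges {s(Ω.s e, Ω.t e)}).Reachable (Ω.s e) i)

/-- A vertex `i` is *in front of* the arrow `e` if it lies in the connected component of
`t e` after the (edge of the) arrow `e` is removed from the underlying graph. -/
def InFront (e : Ω.A) (i : Ω.V) : Prop :=
  ((Ω.graph.deleteEdges {s(Ω.s e, Ω.t e)}).Reachable (Ω.t e) i)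

/-- The arrow `f` is behind the arrow `e` (both of its endpoints are). -/
def ABehind (f e : Ω.A) : Prop := Ω.Behind e (Ω.s f) ∧ Ω.Behind e (Ω.t f)

/-- The arrow `e` is in front of the arrow `f` (both of its endpoints are). -/
def AInFront (e f : Ω.A) : Prop := Ω.InFront f (Ω.s e) ∧ Ω.InFront f (Ω.t e)

/-- The strict relation `≺` on arrows: `f ≺ e` iff `f` is behind `e` and `e` is in front
of `f`. -/
def Prec (f e : Ω.A) : Prop := Ω.ABehind f e ∧ Ω.AInFront e f

/-- A (finite or one-sided infinite) journey in `Ω`: a walk together with a starting vertex.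
It visits the vertices `vtx 0, vtx 1, …, vtx len` (all `n : ℕ` when `len = ⊤`), crossing
for each `n < len` the arrow `arr n`, which joins `vtx n` and `vtx (n+1)` in some direction.
(The values of `vtx` and `arr` beyond `len` are irrelevant.) -/
structure Journey (Ω : Qvr) where
  len : ℕ∞
  vtx : ℕ → Ω.V
  arr : ℕ → Ω.A
  compat : ∀ n : ℕ, (n : ℕ∞) < len →
    (Ω.s (arr n) = vtx n ∧ Ω.t (arr n) = vtx (n + 1)) ∨
      (Ω.s (arr n) = vtx (n + 1) ∧ Ω.t (arr n) = vtx n)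

/-- A journey is injective if it visits no vertex twice. -/
def Journey.Inj {Ω : Qvr} (w : Journey Ω) : Prop :=
  ∀ m n : ℕ, (m : ℕ∞) ≤ w.len → (n : ℕ∞) ≤ w.len → w.vtx m = w.vtx n → m = n

/-- The `n`-th arrow of the journey `w` is oriented inconsistently (crossed from target to
source). -/
def Journey.Inconsistent {Ω : Qvr} (w : Journey Ω) (n : ℕ) : Prop :=
  Ω.s (w.arr n) = w.vtx (n + 1) ∧ Ω.t (w.arr n) = w.vtx n

/-- `Ω` is eventually outward if every injective journey contains at most finitely many
arrows oriented inconsistently. -/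
def EventuallyOutward : Prop :=
  ∀ w : Journey Ω, w.Inj → {n : ℕ | (n : ℕ∞) < w.len ∧ w.Inconsistent n}.Finite

/-- `Ω` is finitely branched if it is the union of finitely many injective walks
(equivalently, journeys). -/
def FinitelyBranched : Prop :=
  ∃ (k : ℕ) (J : Fin k → Journey Ω), (∀ m, (J m).Inj) ∧
    (∀ i : Ω.V, ∃ (m : Fin k) (n : ℕ), (n : ℕ∞) ≤ (J m).len ∧ (J m).vtx n = i) ∧
    (∀ a : Ω.A, ∃ (m : Fin k) (n : ℕ), (n : ℕ∞) < (J m).len ∧ (J m).arr n = a)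

end Qvr

namespace Qvr

variable (Ω : Qvr)

/-- `S` is the vertex set of a connected (full) subquiver: any two of its vertices are
joined by a walk inside `S`. -/
def ConnSub (S : Set Ω.V) : Prop :=
  ∀ (i : Ω.V) (hi : i ∈ S) (j : Ω.V) (hj : j ∈ S),
    (Ω.graph.induce S).Reachable ⟨i, hi⟩ ⟨j, hj⟩

/-- The arrow `e` points towards the (full) subquiver with vertex set `S`:
all of `S` lies in front of `e`. -/
def PointsToward (e : Ω.A) (S : Set Ω.V) : Prop := ∀ i ∈ S, Ω.InFront e i

/-- `β` is a *reduction* of `α`: there is an arrow `e` contained in `α` such that `β` is the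
portion of `α` behind `e`. -/
def Reduction (α β : Set Ω.V) : Prop :=
  ∃ e : Ω.A, Ω.s e ∈ α ∧ Ω.t e ∈ α ∧ β = {i ∈ α | Ω.Behind e i}

/-- `β` is an *enhancement* of `α`: there is an arrow `e` contained in `β` such that `α` is
the portion of `β` in front of `e`. -/
def Enhancement (α β : Set Ω.V) : Prop :=
  ∃ e : Ω.A, Ω.s e ∈ β ∧ Ω.t e ∈ β ∧ α = {i ∈ β | Ω.InFront e i}

/-- A single move: `β` is obtained from `α` by a reduction or an enhancement. -/
def Move (α β : Set Ω.V) : Prop := Ω.Reduction α β ∨ Ω.Enhancement α β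

/-- The set `𝒞` of connected full subquivers of `Ω` (recorded by their vertex sets). -/
def CC (Ω : Qvr) := {S : Set Ω.V // Ω.ConnSub S}

/-- The strict order on `𝒞`: `α > β` iff `β` is obtained from `α` by a finite nonempty
sequence of reductions and enhancements. -/
def GtC : Ω.CC → Ω.CC → Prop :=
  Relation.TransGen fun x y : Ω.CC => Ω.Move x.1 y.1

end Qvr

/-- A representation of the quiver `Ω` over the field `𝔽`: a vector space at each vertex
and a linear map along each arrow. -/
structure QRep (Ω : Qvr) (𝔽 : Type) [Field 𝔽] where
  Vtx : Ω.V → Type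
  acg : ∀ i, AddCommGroup (Vtx i)
  mod : ∀ i, Module 𝔽 (Vtx i)
  f : ∀ a : Ω.A, Vtx (Ω.s a) →ₗ[𝔽] Vtx (Ω.t a)

attribute [instance] QRep.acg QRep.mod

namespace QRep

variable {Ω : Qvr} {𝔽 : Type} [Field 𝔽] (V : QRep Ω 𝔽)

/-- Transport of a subspace along an equality of vertices. -/
def mcast {i j : Ω.V} (h : i = j) (W : Submodule 𝔽 (V.Vtx i)) : Submodule 𝔽 (V.Vtx j) :=
  h ▸ W

/-- One step of transport, across the unique arrow joining two adjacent vertices: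
the image if the arrow is crossed from source to target, the preimage otherwise. -/
noncomputable def stepT {i j : Ω.V} (h : Ω.graph.Adj i j)
    (W : Submodule 𝔽 (V.Vtx i)) : Submodule 𝔽 (V.Vtx j) :=
  let a := Classical.choose h.2
  if hc : Ω.s a = i ∧ Ω.t a = j then
    V.mcast hc.2 ((V.mcast hc.1.symm W).map (V.f a))
  else if hc' : Ω.s a = j ∧ Ω.t a = i then
    V.mcast hc'.1 ((V.mcast hc'.2.symm W).comap (V.f a))
  else ⊥

/-- Transport of a subspace along a walk in the underlying graph. -/
noncomputable def transpW : {i j : Ω.V} → Ω.graph.Walk i j →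
    Submodule 𝔽 (V.Vtx i) → Submodule 𝔽 (V.Vtx j)
  | _, _, SimpleGraph.Walk.nil, W => W
  | _, _, SimpleGraph.Walk.cons h p, W => transpW p (stepT V h W)

/-- The unique injective walk between two vertices of a tree. -/
noncomputable def _root_.Qvr.treeWalk {Ω : Qvr} (hT : Ω.graph.IsTree) (i j : Ω.V) :
    Ω.graph.Walk i j :=
  (hT.existsUnique_path i j).choose

/-- The transport of the subspace `W ⊆ V j` to the vertex `i`, along the unique injective
walk from `j` to `i`. -/
noncomputable def transportTo (hT : Ω.graph.IsTree) (j : Ω.V)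
    (W : Submodule 𝔽 (V.Vtx j)) (i : Ω.V) : Submodule 𝔽 (V.Vtx i) :=
  V.transpW (Qvr.treeWalk hT j i) W

/-- The subrepresentation `V^{e,+}`: everything at the vertices behind `e`, and the
transport of `V (t e)` elsewhere. -/
noncomputable def Vplus (hT : Ω.graph.IsTree) (e : Ω.A) (i : Ω.V) :
    Submodule 𝔽 (V.Vtx i) :=
  if Ω.Behind e i then ⊤ else V.transportTo hT (Ω.t e) ⊤ i

/-- The subrepresentation `V^{e,-}`: zero at the vertices in front of `e`, and the
transport of `{0} ⊆ V (t e)` elsewhere. -/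
noncomputable def Vminus (hT : Ω.graph.IsTree) (e : Ω.A) (i : Ω.V) :
    Submodule 𝔽 (V.Vtx i) :=
  if Ω.InFront e i then ⊥ else V.transportTo hT (Ω.t e) ⊥ i

end QRep

namespace Qvr

variable (Ω : Qvr)

/-- A vertex is a leaf if at most one arrow is incident to it. -/
def IsLeaf (v : Ω.V) : Prop :=
  ∀ a b : Ω.A, (Ω.s a = v ∨ Ω.t a = v) → (Ω.s b = v ∨ Ω.t b = v) → a = b

/-- A virtual arrow: an oriented injective journey, all of whose arrows are oriented away
from its source, which is either infinite or ends in a leaf. -/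
structure VirtArrow (Ω : Qvr) where
  toJourney : Journey Ω
  inj : toJourney.Inj
  consistent : ∀ n : ℕ, (n : ℕ∞) < toJourney.len →
    Ω.s (toJourney.arr n) = toJourney.vtx n ∧ Ω.t (toJourney.arr n) = toJourney.vtx (n + 1)
  endCond : toJourney.len = ⊤ ∨
    ∃ n : ℕ, (n : ℕ∞) = toJourney.len ∧ Ω.IsLeaf (toJourney.vtx n)

/-- The vertex `i` lies on the virtual arrow `E`. -/
def VirtArrow.mem {Ω : Qvr} (E : VirtArrow Ω) (i : Ω.V) : Prop :=
  ∃ n : ℕ, (n : ℕ∞) ≤ E.toJourney.len ∧ E.toJourney.vtx n = i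

/-- `E'` is a tail of the virtual arrow `E`: it traverses the same vertices and arrows
starting `d` steps later. -/
def VirtArrow.IsTail {Ω : Qvr} (E' E : VirtArrow Ω) : Prop :=
  ∃ d : ℕ, (∀ n : ℕ, (n : ℕ∞) ≤ E'.toJourney.len →
      E'.toJourney.vtx n = E.toJourney.vtx (n + d)) ∧
    (∀ n : ℕ, (n : ℕ∞) < E'.toJourney.len → E'.toJourney.arr n = E.toJourney.arr (n + d)) ∧
    E'.toJourney.len + (d : ℕ∞) = E.toJourney.len

/-- Two virtual arrows are equivalent (represent the same "virtual boundary") if they share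
a common tail; equivalent virtual arrows are counted as a single virtual arrow. -/
def VirtArrow.Equiv {Ω : Qvr} (E E' : VirtArrow Ω) : Prop :=
  ∃ E'' : VirtArrow Ω, E''.IsTail E ∧ E''.IsTail E'

/-- Boundary arrows of the full subquiver on `S` pointing towards it. -/
def InBdry (S : Set Ω.V) : Set Ω.A := {e | Ω.t e ∈ S ∧ Ω.s e ∉ S}

/-- Boundary arrows of the full subquiver on `S` pointing away from it. -/
def OutBdry (S : Set Ω.V) : Set Ω.A := {e | Ω.s e ∈ S ∧ Ω.t e ∉ S}

/-- Virtual boundary arrows of the full subquiver on `S`: virtual arrows lying entirely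
within `S`. -/
def VirtBdry (S : Set Ω.V) : Set (VirtArrow Ω) := {E | ∀ i, E.mem i → i ∈ S}

end Qvr

namespace QRep

variable {Ω : Qvr} {𝔽 : Type} [Field 𝔽] (V : QRep Ω 𝔽)

/-- The subrepresentation `V^{E,+}` attached to a virtual arrow `E`: everything at the
vertices of `E`, and the transport of `V j` elsewhere, where `j` is the closest vertex
of `E` (the unique vertex of `E` such that the injective walk from it contains no other
vertex of `E`). -/
noncomputable def VEplus (hT : Ω.graph.IsTree) (E : Qvr.VirtArrow Ω) (i : Ω.V) :
    Submodule 𝔽 (V.Vtx i) :=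
  if E.mem i then ⊤
  else
    ⨆ j : Ω.V, ⨆ (_ : E.mem j ∧
      ∀ k ∈ (Qvr.treeWalk hT j i).support, E.mem k → k = j),
      V.transportTo hT j ⊤ i

/-- The subrepresentation `F^α` attached to a (connected full) subquiver with vertex set
`S`: the intersection of `V^{e,+}` over the boundary arrows `e` pointing towards it, of
`V^{e,-}` over the boundary arrows pointing away from it, and of `V^{E,+}` over its virtual
boundary arrows. -/
noncomputable def Fsub (hT : Ω.graph.IsTree) (S : Set Ω.V) (i : Ω.V) :
    Submodule 𝔽 (V.Vtx i) :=
  (⨅ e ∈ Ω.InBdry S, V.Vplus hT e i) ⊓ (⨅ e ∈ Ω.OutBdry S, V.Vminus hT e i) ⊓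
    ⨅ E ∈ Ω.VirtBdry S, V.VEplus hT E i

/-- The sum `Σ_{β < α} F^β` of the subrepresentations attached to the connected full
subquivers strictly below `α`. -/
noncomputable def sumLt (hT : Ω.graph.IsTree) (α : Ω.CC) (i : Ω.V) :
    Submodule 𝔽 (V.Vtx i) :=
  ⨆ β : Ω.CC, ⨆ (_ : Ω.GtC α β), V.Fsub hT β.1 i

end QRep

namespace Qvr

variable (Ω : Qvr)

/-- The literal boundary arrows of the full subquiver on `S` lying behind the arrow `e`. -/
def LBdryBehind (S : Set Ω.V) (e : Ω.A) : Set Ω.A :=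
  {b | (b ∈ Ω.InBdry S ∪ Ω.OutBdry S) ∧ Ω.ABehind b e}

/-- The virtual boundary arrows of the full subquiver on `S` lying behind the arrow `e`. -/
def VBdryBehind (S : Set Ω.V) (e : Ω.A) : Set (VirtArrow Ω) :=
  {E | E ∈ Ω.VirtBdry S ∧ ∀ i, E.mem i → Ω.Behind e i}

/-- There is exactly one literal or virtual boundary arrow of the full subquiver on `S`
behind the arrow `e` (virtual arrows being counted up to equivalence). -/
def ExactlyOneBdryBehind (S : Set Ω.V) (e : Ω.A) : Prop :=
  ((∃! b, b ∈ Ω.LBdryBehind S e) ∧ Ω.VBdryBehind S e = ∅) ∨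
    (Ω.LBdryBehind S e = ∅ ∧ (Ω.VBdryBehind S e).Nonempty ∧
      ∀ E ∈ Ω.VBdryBehind S e, ∀ E' ∈ Ω.VBdryBehind S e, E.Equiv E')

end Qvr

section Aux

open SimpleGraph

variable {Ω : Qvr}

lemma arrowAdj (hS : Ω.Simple) (a : Ω.A) : Ω.graph.Adj (Ω.s a) (Ω.t a) :=
  ⟨hS.1 a, a, Or.inl ⟨rfl, rfl⟩⟩

lemma arrow_eq_of_sym2 (hS : Ω.Simple) {a b : Ω.A}
    (h : s(Ω.s a, Ω.t a) = s(Ω.s b, Ω.t b)) : a = b := by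
  rw [Sym2.eq_iff] at h
  rcases h with ⟨h1, h2⟩ | ⟨h1, h2⟩
  · exact hS.2 a b (by rw [h1, h2])
  · exact hS.2 a b (by rw [h1, h2, Set.pair_comm])

/-- Every arrow of a tree quiver is a bridge. -/
lemma not_reach_del (hS : Ω.Simple) (hT : Ω.graph.IsTree) (a : Ω.A) :
    ¬ (Ω.graph.deleteEdges {s(Ω.s a, Ω.t a)}).Reachable (Ω.s a) (Ω.t a) := by
  have hb : Ω.graph.IsBridge s(Ω.s a, Ω.t a) :=
    SimpleGraph.isAcyclic_iff_forall_adj_isBridge.mp hT.IsAcyclic (arrowAdj hS a)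
  exact SimpleGraph.isBridge_iff.mp hb

lemma behind_refl (e : Ω.A) : Ω.Behind e (Ω.s e) := Reachable.refl _
lemma infront_refl (e : Ω.A) : Ω.InFront e (Ω.t e) := Reachable.refl _

lemma behind_trans {e : Ω.A} {i j : Ω.V} (h : Ω.Behind e i)
    (h' : (Ω.graph.deleteEdges {s(Ω.s e, Ω.t e)}).Reachable i j) : Ω.Behind e j :=
  h.trans h'

lemma infront_trans {e : Ω.A} {i j : Ω.V} (h : Ω.InFront e i)
    (h' : (Ω.graph.deleteEdges {s(Ω.s e, Ω.t e)}).Reachable i j) : Ω.InFront e j :=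
  h.trans h'

lemma not_behind_and_infront (hS : Ω.Simple) (hT : Ω.graph.IsTree) (a : Ω.A) (i : Ω.V) :
    ¬ (Ω.Behind a i ∧ Ω.InFront a i) := by
  rintro ⟨h1, h2⟩
  exact not_reach_del hS hT a (h1.trans h2.symm)

lemma not_behind_t (hS : Ω.Simple) (hT : Ω.graph.IsTree) (a : Ω.A) :
    ¬ Ω.Behind a (Ω.t a) := fun h =>
  not_behind_and_infront hS hT a (Ω.t a) ⟨h, infront_refl a⟩

lemma not_infront_s (hS : Ω.Simple) (hT : Ω.graph.IsTree) (a : Ω.A) :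
    ¬ Ω.InFront a (Ω.s a) := fun h =>
  not_behind_and_infront hS hT a (Ω.s a) ⟨behind_refl a, h⟩

lemma side_of_walk (e : Ω.A) {u v : Ω.V} (w : Ω.graph.Walk u v)
    (hu : Ω.Behind e u ∨ Ω.InFront e u) : Ω.Behind e v ∨ Ω.InFront e v := by
  induction w with
  | nil => exact hu
  | @cons x y z h p ih =>
      apply ih
      by_cases hedge : s(x, y) = s(Ω.s e, Ω.t e)
      · rw [Sym2.eq_iff] at hedge
        rcases hedge with ⟨h1, rfl⟩ | ⟨h1, rfl⟩
        · exact Or.inr (infront_refl e)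
        · exact Or.inl (behind_refl e)
      · have hadj : (Ω.graph.deleteEdges {s(Ω.s e, Ω.t e)}).Adj x y := by
          rw [SimpleGraph.deleteEdges_adj]
          exact ⟨h, by simpa using hedge⟩
        exact hu.imp (fun hb => behind_trans hb hadj.reachable)
          (fun hf => infront_trans hf hadj.reachable)

lemma behind_or_infront (hT : Ω.graph.IsTree) (e : Ω.A) (i : Ω.V) :
    Ω.Behind e i ∨ Ω.InFront e i := by
  obtain ⟨w⟩ := (hT.isConnected.preconnected (Ω.s e) i : Ω.graph.Reachable _ i)
  exact side_of_walk e w (Or.inl (behind_refl e))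

/-- Inside a connected subquiver avoiding one endpoint of `b`, vertices are reachable
with the edge of `b` deleted. -/
lemma reach_del_of_connSub (hconn : Ω.ConnSub S) {b : Ω.A}
    (hb : Ω.s b ∉ S ∨ Ω.t b ∉ S) {i j : Ω.V} (hi : i ∈ S) (hj : j ∈ S) :
    (Ω.graph.deleteEdges {s(Ω.s b, Ω.t b)}).Reachable i j := by
  obtain ⟨w⟩ := hconn i hi j hj
  have key : ∀ (x y : S) (w : (Ω.graph.induce S).Walk x y),
      (Ω.graph.deleteEdges {s(Ω.s b, Ω.t b)}).Reachable x.1 y.1 := by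
    intro x y w
    induction w with
    | nil => exact SimpleGraph.Reachable.refl _
    | @cons p q r h _ ih =>
        refine SimpleGraph.Reachable.trans ?_ ih
        have hadj : Ω.graph.Adj p.1 q.1 := h
        have hedge : s(p.1, q.1) ≠ s(Ω.s b, Ω.t b) := by
          intro hcon
          rw [Sym2.eq_iff] at hcon
          rcases hb with hb | hb
          · rcases hcon with ⟨h1, h2⟩ | ⟨h1, h2⟩
            · exact hb (h1 ▸ p.2)
            · exact hb (h2 ▸ q.2)
          · rcases hcon with ⟨h1, h2⟩ | ⟨h1, h2⟩
            · exact hb (h2 ▸ q.2)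
            · exact hb (h1 ▸ p.2)
        exact SimpleGraph.Adj.reachable (by rw [SimpleGraph.deleteEdges_adj]; exact ⟨hadj, by simpa using hedge⟩)
  exact key ⟨i, hi⟩ ⟨j, hj⟩ w

lemma infront_of_inBdry (hconn : Ω.ConnSub S) {b : Ω.A} (hb : b ∈ Ω.InBdry S)
    {i : Ω.V} (hi : i ∈ S) : Ω.InFront b i :=
  reach_del_of_connSub hconn (Or.inl hb.2) hb.1 hi

lemma behind_of_outBdry (hconn : Ω.ConnSub S) {b : Ω.A} (hb : b ∈ Ω.OutBdry S)
    {i : Ω.V} (hi : i ∈ S) : Ω.Behind b i :=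
  reach_del_of_connSub hconn (Or.inr hb.2) hb.1 hi

lemma treeWalk_isPath (hT : Ω.graph.IsTree) (i j : Ω.V) :
    (Qvr.treeWalk hT i j).IsPath := (hT.existsUnique_path i j).choose_spec.1

lemma path_eq_treeWalk (hT : Ω.graph.IsTree) {i j : Ω.V} (p : Ω.graph.Walk i j)
    (hp : p.IsPath) : p = Qvr.treeWalk hT i j :=
  (hT.existsUnique_path i j).choose_spec.2 p hp

/-- If `i` and `j` are reachable avoiding an edge set, the tree walk between them stays
reachable from `i` avoiding that edge set. -/
lemma treeWalk_support_reach (hT : Ω.graph.IsTree) {s : Set (Sym2 Ω.V)} {i j : Ω.V}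
    (h : (Ω.graph.deleteEdges s).Reachable i j) :
    ∀ x ∈ (Qvr.treeWalk hT i j).support, (Ω.graph.deleteEdges s).Reachable i x := by
  obtain ⟨p⟩ := h
  have hq : (p.bypass.transfer Ω.graph (fun e he => SimpleGraph.edgeSet_mono (Ω.graph.deleteEdges_le s) (p.bypass.edges_subset_edgeSet he))) = Qvr.treeWalk hT i j :=
    path_eq_treeWalk hT _ (p.bypass_isPath.transfer _)
  intro x hx
  rw [← hq, SimpleGraph.Walk.support_transfer] at hx
  exact ⟨p.bypass.takeUntil x hx⟩

/-- The tree walk from a vertex behind `e` to `s e`, extended by the arrow `e`, is the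
tree walk to `t e`. -/
lemma treeWalk_concat_behind (hS : Ω.Simple) (hT : Ω.graph.IsTree) {e : Ω.A} {i : Ω.V}
    (hi : Ω.Behind e i) :
    Qvr.treeWalk hT i (Ω.t e) = (Qvr.treeWalk hT i (Ω.s e)).concat (arrowAdj hS e) := by
  refine (path_eq_treeWalk hT _ ?_).symm
  have hp := treeWalk_isPath hT i (Ω.s e)
  have hmem : Ω.t e ∉ (Qvr.treeWalk hT i (Ω.s e)).support := by
    intro hx
    have := treeWalk_support_reach hT hi.symm _ hx
    exact not_behind_t hS hT e (hi.trans this)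
  rw [SimpleGraph.Walk.isPath_def, SimpleGraph.Walk.support_concat,
    List.nodup_append]
  exact ⟨hp.2, List.nodup_singleton _, fun x hx y hy hxy => hmem (by
    rw [List.mem_singleton] at hy; subst hy; subst hxy; exact hx)⟩

lemma treeWalk_concat_infront (hS : Ω.Simple) (hT : Ω.graph.IsTree) {e : Ω.A} {i : Ω.V}
    (hi : Ω.InFront e i) :
    Qvr.treeWalk hT i (Ω.s e) = (Qvr.treeWalk hT i (Ω.t e)).concat (arrowAdj hS e).symm := by
  refine (path_eq_treeWalk hT _ ?_).symm
  have hp := treeWalk_isPath hT i (Ω.t e)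
  have hmem : Ω.s e ∉ (Qvr.treeWalk hT i (Ω.t e)).support := by
    intro hx
    have := treeWalk_support_reach hT hi.symm _ hx
    exact not_infront_s hS hT e (hi.trans this)
  rw [SimpleGraph.Walk.isPath_def, SimpleGraph.Walk.support_concat,
    List.nodup_append]
  exact ⟨hp.2, List.nodup_singleton _, fun x hx y hy hxy => hmem (by
    rw [List.mem_singleton] at hy; subst hy; subst hxy; exact hx)⟩
variable {𝔽 : Type} [Field 𝔽]

lemma mcast_mono (V : QRep Ω 𝔽) {i j : Ω.V} (h : i = j) {W W' : Submodule 𝔽 (V.Vtx i)}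
    (hW : W ≤ W') : V.mcast h W ≤ V.mcast h W' := by subst h; exact hW

lemma mcast_top (V : QRep Ω 𝔽) {i j : Ω.V} (h : i = j) :
    V.mcast h (⊤ : Submodule 𝔽 (V.Vtx i)) = ⊤ := by subst h; rfl

lemma mcast_map_eq (V : QRep Ω 𝔽) {a c : Ω.A} (hca : c = a)
    (h1 : Ω.s c = Ω.s a) (h2 : Ω.t c = Ω.t a) (W : Submodule 𝔽 (V.Vtx (Ω.s a))) :
    V.mcast h2 ((V.mcast h1.symm W).map (V.f c)) = W.map (V.f a) := by
  revert h1 h2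
  rw [hca]
  intro h1 h2
  rfl

lemma mcast_comap_eq (V : QRep Ω 𝔽) {a c : Ω.A} (hca : c = a)
    (h1 : Ω.s c = Ω.s a) (h2 : Ω.t c = Ω.t a) (W : Submodule 𝔽 (V.Vtx (Ω.t a))) :
    V.mcast h1 ((V.mcast h2.symm W).comap (V.f c)) = W.comap (V.f a) := by
  revert h1 h2
  rw [hca]
  intro h1 h2
  rfl

lemma stepT_fwd (hS : Ω.Simple) (V : QRep Ω 𝔽) (a : Ω.A)
    (h : Ω.graph.Adj (Ω.s a) (Ω.t a)) (W : Submodule 𝔽 (V.Vtx (Ω.s a))) :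
    V.stepT h W = W.map (V.f a) := by
  simp only [QRep.stepT]
  split_ifs with hc hc'
  · have hca : Classical.choose h.2 = a := hS.2 _ _ (by rw [hc.1, hc.2])
    exact mcast_map_eq V hca hc.1 hc.2 W
  · have hca : Classical.choose h.2 = a := hS.2 _ _ (by rw [hc'.1, hc'.2, Set.pair_comm])
    obtain ⟨h1, -⟩ := hc'
    rw [hca] at h1
    exact absurd h1 (hS.1 a)
  · rcases Classical.choose_spec h.2 with hh | hh
    · exact absurd hh hc
    · exact absurd hh hc'

lemma stepT_bwd (hS : Ω.Simple) (V : QRep Ω 𝔽) (a : Ω.A)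
    (h : Ω.graph.Adj (Ω.t a) (Ω.s a)) (W : Submodule 𝔽 (V.Vtx (Ω.t a))) :
    V.stepT h W = W.comap (V.f a) := by
  simp only [QRep.stepT]
  split_ifs with hc hc'
  · have hca : Classical.choose h.2 = a := hS.2 _ _ (by rw [hc.1, hc.2, Set.pair_comm])
    obtain ⟨h1, -⟩ := hc
    rw [hca] at h1
    exact absurd h1 (hS.1 a)
  · have hca : Classical.choose h.2 = a := hS.2 _ _ (by rw [hc'.1, hc'.2])
    exact mcast_comap_eq V hca hc'.1 hc'.2 W
  · rcases Classical.choose_spec h.2 with hh | hh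
    · exact absurd hh hc
    · exact absurd hh hc'

/-- Crossing any arrow backwards preserves the full submodule. -/
lemma stepT_top (hS : Ω.Simple) (V : QRep Ω 𝔽) {i j : Ω.V} (h : Ω.graph.Adj i j)
    (a : Ω.A) (hs : Ω.s a = j) (ht : Ω.t a = i) :
    V.stepT h (⊤ : Submodule 𝔽 (V.Vtx i)) = ⊤ := by
  subst hs; subst ht
  rw [stepT_bwd hS V a h]
  exact Submodule.comap_top _

lemma stepT_mono (V : QRep Ω 𝔽) {i j : Ω.V} (h : Ω.graph.Adj i j)
    {W W' : Submodule 𝔽 (V.Vtx i)} (hW : W ≤ W') : V.stepT h W ≤ V.stepT h W' := by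
  simp only [QRep.stepT]
  split_ifs
  · exact mcast_mono V _ (Submodule.map_mono (mcast_mono V _ hW))
  · exact mcast_mono V _ (Submodule.comap_mono (mcast_mono V _ hW))
  · exact le_rfl

lemma transpW_mono (V : QRep Ω 𝔽) {i j : Ω.V} (p : Ω.graph.Walk i j)
    {W W' : Submodule 𝔽 (V.Vtx i)} (hW : W ≤ W') : V.transpW p W ≤ V.transpW p W' := by
  induction p with
  | nil => exact hW
  | cons h q ih => exact ih (stepT_mono V h hW)

lemma transpW_append (V : QRep Ω 𝔽) {i j k : Ω.V} (p : Ω.graph.Walk i j)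
    (q : Ω.graph.Walk j k) (W : Submodule 𝔽 (V.Vtx i)) :
    V.transpW (p.append q) W = V.transpW q (V.transpW p W) := by
  induction p with
  | nil => rfl
  | cons h r ih => simp only [SimpleGraph.Walk.cons_append, QRep.transpW, ih]

lemma transpW_concat (V : QRep Ω 𝔽) {i j k : Ω.V} (p : Ω.graph.Walk i j)
    (h : Ω.graph.Adj j k) (W : Submodule 𝔽 (V.Vtx i)) :
    V.transpW (p.concat h) W = V.stepT h (V.transpW p W) := by
  rw [SimpleGraph.Walk.concat_eq_append, transpW_append]
  rfl

/-- Transport to `t e` from behind `e` is the image under `f e` of the transport to `s e`. -/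
lemma transportTo_te (hS : Ω.Simple) (hT : Ω.graph.IsTree) (V : QRep Ω 𝔽) {e : Ω.A}
    {j : Ω.V} (hj : Ω.Behind e j) (W : Submodule 𝔽 (V.Vtx j)) :
    V.transportTo hT j W (Ω.t e) = (V.transportTo hT j W (Ω.s e)).map (V.f e) := by
  simp only [QRep.transportTo]
  rw [treeWalk_concat_behind hS hT hj, transpW_concat, stepT_fwd hS V e]

/-- Transport to `s e` from in front of `e` is the preimage under `f e` of the transport
to `t e`. -/
lemma transportTo_se (hS : Ω.Simple) (hT : Ω.graph.IsTree) (V : QRep Ω 𝔽) {e : Ω.A}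
    {j : Ω.V} (hj : Ω.InFront e j) (W : Submodule 𝔽 (V.Vtx j)) :
    V.transportTo hT j W (Ω.s e) = (V.transportTo hT j W (Ω.t e)).comap (V.f e) := by
  simp only [QRep.transportTo]
  rw [treeWalk_concat_infront hS hT hj, transpW_concat, stepT_bwd hS V e]
lemma cast_succ_le {n : ℕ} {L : ℕ∞} : ((n + 1 : ℕ) : ℕ∞) ≤ L ↔ (n : ℕ∞) < L := by
  push_cast
  exact ENat.add_one_le_iff (ENat.coe_ne_top n)

lemma jadj (hS : Ω.Simple) (E : Qvr.VirtArrow Ω) {n : ℕ}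
    (hn : (n : ℕ∞) < E.toJourney.len) :
    Ω.graph.Adj (E.toJourney.vtx n) (E.toJourney.vtx (n + 1)) := by
  obtain ⟨h1, h2⟩ := E.consistent n hn
  exact ⟨by rw [← h1, ← h2]; exact hS.1 _, E.toJourney.arr n, Or.inl ⟨h1, h2⟩⟩

lemma mem_vtx (E : Qvr.VirtArrow Ω) {n : ℕ} (hn : (n : ℕ∞) ≤ E.toJourney.len) :
    E.mem (E.toJourney.vtx n) := ⟨n, hn, rfl⟩

lemma vtx_inj (E : Qvr.VirtArrow Ω) {m n : ℕ} (hm : (m : ℕ∞) ≤ E.toJourney.len)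
    (hn : (n : ℕ∞) ≤ E.toJourney.len)
    (h : E.toJourney.vtx m = E.toJourney.vtx n) : m = n := E.inj m n hm hn h

noncomputable def jFwd (hS : Ω.Simple) (E : Qvr.VirtArrow Ω) (n : ℕ) :
    (k : ℕ) → ((n + k : ℕ) : ℕ∞) ≤ E.toJourney.len →
      Ω.graph.Walk (E.toJourney.vtx n) (E.toJourney.vtx (n + k))
  | 0, _ => SimpleGraph.Walk.nil
  | k+1, h => (jFwd hS E n k (le_trans (Nat.cast_le.2 (Nat.add_le_add_left k.le_succ n)) h)).concat
      (jadj hS E (lt_of_lt_of_le (Nat.cast_lt.2 (Nat.add_lt_add_left k.lt_succ_self n)) h))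

noncomputable def jBwd (hS : Ω.Simple) (E : Qvr.VirtArrow Ω) (n : ℕ) :
    (k : ℕ) → ((n + k : ℕ) : ℕ∞) ≤ E.toJourney.len →
      Ω.graph.Walk (E.toJourney.vtx (n + k)) (E.toJourney.vtx n)
  | 0, _ => SimpleGraph.Walk.nil
  | k+1, h => SimpleGraph.Walk.cons
      (jadj hS E (lt_of_lt_of_le (Nat.cast_lt.2 (Nat.add_lt_add_left k.lt_succ_self n)) h)).symm
      (jBwd hS E n k (le_trans (Nat.cast_le.2 (Nat.add_le_add_left k.le_succ n)) h))

lemma jFwd_support (hS : Ω.Simple) (E : Qvr.VirtArrow Ω) (n : ℕ) :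
    ∀ (k : ℕ) (h : ((n + k : ℕ) : ℕ∞) ≤ E.toJourney.len),
      ∀ x ∈ (jFwd hS E n k h).support,
        ∃ m, n ≤ m ∧ m ≤ n + k ∧ E.toJourney.vtx m = x := by
  intro k
  induction k with
  | zero => intro h x hx
            simp only [jFwd, SimpleGraph.Walk.support_nil, List.mem_singleton] at hx
            exact ⟨n + 0, by omega, le_rfl, hx.symm⟩
  | succ k ih =>
      intro h x hx
      simp only [jFwd, SimpleGraph.Walk.support_concat, List.concat_eq_append,
        List.mem_append, List.mem_singleton] at hx
      rcases hx with hx | rfl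
      · obtain ⟨m, h1, h2, h3⟩ := ih _ x hx
        exact ⟨m, h1, by omega, h3⟩
      · exact ⟨n + (k+1), by omega, le_rfl, rfl⟩

lemma jFwd_mem_support (hS : Ω.Simple) (E : Qvr.VirtArrow Ω) (n : ℕ) :
    ∀ (k : ℕ) (h : ((n + k : ℕ) : ℕ∞) ≤ E.toJourney.len) (m : ℕ),
      n ≤ m → m ≤ n + k → E.toJourney.vtx m ∈ (jFwd hS E n k h).support := by
  intro k
  induction k with
  | zero => intro h m h1 h2
            have : m = n := by omega
            subst this
            simp [jFwd]
  | succ k ih =>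
      intro h m h1 h2
      simp only [jFwd, SimpleGraph.Walk.support_concat, List.concat_eq_append,
        List.mem_append, List.mem_singleton]
      rcases Nat.lt_or_ge m (n + k + 1) with hm | hm
      · exact Or.inl (ih _ m h1 (by omega))
      · have : m = n + (k + 1) := by omega
        subst this
        exact Or.inr rfl

lemma jFwd_isPath (hS : Ω.Simple) (E : Qvr.VirtArrow Ω) (n : ℕ) :
    ∀ (k : ℕ) (h : ((n + k : ℕ) : ℕ∞) ≤ E.toJourney.len), (jFwd hS E n k h).IsPath := by
  intro k
  induction k with
  | zero => exact fun h => SimpleGraph.Walk.IsPath.nil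
  | succ k ih =>
      intro h
      simp only [jFwd]
      rw [SimpleGraph.Walk.isPath_def, SimpleGraph.Walk.support_concat,
        List.nodup_append]
      refine ⟨(SimpleGraph.Walk.isPath_def _ |>.mp (ih _)), List.nodup_singleton _, ?_⟩
      intro x hx y hx' hxy
      rw [List.mem_singleton] at hx'
      subst hx'
      subst hxy
      obtain ⟨m, h1, h2, h3⟩ := jFwd_support hS E n k _ _ hx
      have : m = n + (k + 1) := vtx_inj E (le_trans (Nat.cast_le.2 (by omega)) h) h h3
      omega

lemma jBwd_support (hS : Ω.Simple) (E : Qvr.VirtArrow Ω) (n : ℕ) :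
    ∀ (k : ℕ) (h : ((n + k : ℕ) : ℕ∞) ≤ E.toJourney.len),
      ∀ x ∈ (jBwd hS E n k h).support,
        ∃ m, n ≤ m ∧ m ≤ n + k ∧ E.toJourney.vtx m = x := by
  intro k
  induction k with
  | zero => intro h x hx
            simp only [jBwd, SimpleGraph.Walk.support_nil, List.mem_singleton] at hx
            exact ⟨n + 0, by omega, le_rfl, hx.symm⟩
  | succ k ih =>
      intro h x hx
      simp only [jBwd, SimpleGraph.Walk.support_cons, List.mem_cons] at hx
      rcases hx with rfl | hx
      · exact ⟨n + (k+1), by omega, le_rfl, rfl⟩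
      · obtain ⟨m, h1, h2, h3⟩ := ih _ x hx
        exact ⟨m, h1, by omega, h3⟩

lemma jBwd_isPath (hS : Ω.Simple) (E : Qvr.VirtArrow Ω) (n : ℕ) :
    ∀ (k : ℕ) (h : ((n + k : ℕ) : ℕ∞) ≤ E.toJourney.len), (jBwd hS E n k h).IsPath := by
  intro k
  induction k with
  | zero => exact fun h => SimpleGraph.Walk.IsPath.nil
  | succ k ih =>
      intro h
      simp only [jBwd]
      rw [SimpleGraph.Walk.cons_isPath_iff]
      refine ⟨ih _, ?_⟩
      intro hx
      obtain ⟨m, h1, h2, h3⟩ := jBwd_support hS E n k _ _ hx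
      have : m = n + (k + 1) := vtx_inj E (le_trans (Nat.cast_le.2 (by omega)) h) h h3
      omega

lemma jBwd_transp_top (hS : Ω.Simple) (V : QRep Ω 𝔽) (E : Qvr.VirtArrow Ω) (n : ℕ) :
    ∀ (k : ℕ) (h : ((n + k : ℕ) : ℕ∞) ≤ E.toJourney.len),
      V.transpW (jBwd hS E n k h) ⊤ = ⊤ := by
  intro k
  induction k with
  | zero => intro h; rfl
  | succ k ih =>
      intro h
      have hlt : ((n + k : ℕ) : ℕ∞) < E.toJourney.len :=
        lt_of_lt_of_le (Nat.cast_lt.2 (by omega)) h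
      simp only [jBwd, QRep.transpW]
      rw [stepT_top hS V _ (E.toJourney.arr (n + k)) (E.consistent _ hlt).1
        (E.consistent _ hlt).2]
      exact ih _

lemma tail_mem_subset {E' E : Qvr.VirtArrow Ω} (h : E'.IsTail E) {i : Ω.V}
    (hi : E'.mem i) : E.mem i := by
  obtain ⟨d, hv, -, hlen⟩ := h
  obtain ⟨n, hn, rfl⟩ := hi
  refine ⟨n + d, ?_, (hv n hn).symm⟩
  rw [← hlen]
  push_cast
  exact add_le_add hn le_rfl
lemma isPath_append {u v w : Ω.V} {p : Ω.graph.Walk u v} {q : Ω.graph.Walk v w}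
    (hp : p.IsPath) (hq : q.IsPath)
    (hint : ∀ x ∈ p.support, x ∈ q.support → x = v) : (p.append q).IsPath := by
  have hq' := (SimpleGraph.Walk.isPath_def _).mp hq
  rw [SimpleGraph.Walk.support_eq_cons] at hq'
  rw [SimpleGraph.Walk.isPath_def, SimpleGraph.Walk.support_append, List.nodup_append]
  refine ⟨(SimpleGraph.Walk.isPath_def _).mp hp, (List.nodup_cons.mp hq').2, ?_⟩
  intro x hx y hx' hxy
  subst hxy
  have hxq : x ∈ q.support := by
    rw [SimpleGraph.Walk.support_eq_cons]
    exact List.mem_cons_of_mem _ hx'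
  have := hint x hx hxq
  subst this
  exact (List.nodup_cons.mp hq').1 hx'

lemma valid_unique_aux (hS : Ω.Simple) (hT : Ω.graph.IsTree) (E : Qvr.VirtArrow Ω)
    {i : Ω.V} (hi : ¬ E.mem i) {n n' : ℕ} (hn : (n : ℕ∞) ≤ E.toJourney.len)
    (hn' : (n' : ℕ∞) ≤ E.toJourney.len) (hlt : n < n')
    (hv : ∀ x ∈ (Qvr.treeWalk hT (E.toJourney.vtx n) i).support,
      E.mem x → x = E.toJourney.vtx n)
    (hv' : ∀ x ∈ (Qvr.treeWalk hT (E.toJourney.vtx n') i).support,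
      E.mem x → x = E.toJourney.vtx n') : False := by
  have hkk : n + (n' - n) = n' := by omega
  have hq0 : ((n + (n' - n) : ℕ) : ℕ∞) ≤ E.toJourney.len := by rw [hkk]; exact hn'
  -- the walk along the journey from `vtx n` to `vtx n'`
  let q : Ω.graph.Walk (E.toJourney.vtx n) (E.toJourney.vtx n') :=
    (jFwd hS E n (n' - n) hq0).copy rfl (by rw [hkk])
  have hqpath : q.IsPath := by
    simp only [q, SimpleGraph.Walk.isPath_copy]
    exact jFwd_isPath hS E n _ _
  -- the walk from `vtx n` to `vtx n'` through `i`
  let r : Ω.graph.Walk (E.toJourney.vtx n) (E.toJourney.vtx n') :=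
    (Qvr.treeWalk hT (E.toJourney.vtx n) i).append
      (Qvr.treeWalk hT (E.toJourney.vtx n') i).reverse
  have hqr : q = r.bypass :=
    (path_eq_treeWalk hT q hqpath).trans (path_eq_treeWalk hT r.bypass r.bypass_isPath).symm
  have hsucc_le : ((n + 1 : ℕ) : ℕ∞) ≤ E.toJourney.len :=
    le_trans (Nat.cast_le.2 (by omega)) hn'
  have hmem1 : E.toJourney.vtx (n + 1) ∈ q.support := by
    simp only [q, SimpleGraph.Walk.support_copy]
    exact jFwd_mem_support hS E n _ _ (n + 1) (by omega) (by omega)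
  have hmem1' : E.toJourney.vtx (n + 1) ∈ r.support := by
    rw [hqr] at hmem1
    exact SimpleGraph.Walk.support_bypass_subset _ hmem1
  rw [SimpleGraph.Walk.mem_support_append_iff, SimpleGraph.Walk.support_reverse,
    List.mem_reverse] at hmem1'
  have hmemE1 : E.mem (E.toJourney.vtx (n + 1)) := mem_vtx E hsucc_le
  have hnn' : n + 1 = n' := by
    rcases hmem1' with h | h
    · have := hv _ h hmemE1
      have := vtx_inj E hsucc_le hn this
      omega
    · have := hv' _ h hmemE1
      exact vtx_inj E hsucc_le hn' this
  subst hnn'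
  -- now `vtx n` and `vtx (n+1)` are adjacent
  have hadj : Ω.graph.Adj (E.toJourney.vtx n) (E.toJourney.vtx (n + 1)) :=
    jadj hS E (lt_of_lt_of_le (Nat.cast_lt.2 (by omega)) hn')
  have hnotmem : E.toJourney.vtx (n + 1) ∉
      (Qvr.treeWalk hT (E.toJourney.vtx n) i).support := by
    intro hx
    have := hv _ hx hmemE1
    have := vtx_inj E hsucc_le hn this
    omega
  have hw2 : SimpleGraph.Walk.cons hadj.symm (Qvr.treeWalk hT (E.toJourney.vtx n) i) =
      Qvr.treeWalk hT (E.toJourney.vtx (n + 1)) i :=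
    path_eq_treeWalk hT _ ((SimpleGraph.Walk.cons_isPath_iff _ _).mpr
      ⟨treeWalk_isPath hT _ _, hnotmem⟩)
  have hmemn : E.toJourney.vtx n ∈ (Qvr.treeWalk hT (E.toJourney.vtx (n+1)) i).support := by
    rw [← hw2, SimpleGraph.Walk.support_cons]
    exact List.mem_cons_of_mem _ (SimpleGraph.Walk.start_mem_support _)
  have := hv' _ hmemn (mem_vtx E hn)
  have := vtx_inj E hn hsucc_le this
  omega

lemma valid_unique (hS : Ω.Simple) (hT : Ω.graph.IsTree) (E : Qvr.VirtArrow Ω)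
    {i : Ω.V} (hi : ¬ E.mem i) {j j' : Ω.V}
    (hj : E.mem j ∧ ∀ x ∈ (Qvr.treeWalk hT j i).support, E.mem x → x = j)
    (hj' : E.mem j' ∧ ∀ x ∈ (Qvr.treeWalk hT j' i).support, E.mem x → x = j') :
    j = j' := by
  obtain ⟨⟨n, hn, rfl⟩, hv⟩ := hj
  obtain ⟨⟨n', hn', rfl⟩, hv'⟩ := hj'
  rcases lt_trichotomy n n' with h | h | h
  · exact absurd (valid_unique_aux hS hT E hi hn hn' h hv hv') (fun h => h)
  · rw [h]
  · exact absurd (valid_unique_aux hS hT E hi hn' hn h hv' hv) (fun h => h)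

lemma VEplus_eq (hS : Ω.Simple) (hT : Ω.graph.IsTree) (V : QRep Ω 𝔽)
    (E : Qvr.VirtArrow Ω) {i : Ω.V} (hi : ¬ E.mem i) {j : Ω.V} (hj : E.mem j)
    (hv : ∀ x ∈ (Qvr.treeWalk hT j i).support, E.mem x → x = j) :
    V.VEplus hT E i = V.transportTo hT j ⊤ i := by
  rw [QRep.VEplus, if_neg hi]
  refine le_antisymm (iSup₂_le fun j' hj' => ?_) ?_
  · have : j' = j := valid_unique hS hT E hi hj' ⟨hj, hv⟩
    rw [this]
  · exact le_iSup₂ (f := fun j _ => V.transportTo hT j ⊤ i) j ⟨hj, hv⟩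

/-- Transport of the full space from any vertex of `E` along a path is contained in
`V^{E,+}`. -/
lemma transp_le_VEplus (hS : Ω.Simple) (hT : Ω.graph.IsTree) (V : QRep Ω 𝔽)
    (E : Qvr.VirtArrow Ω) {i : Ω.V} (hi : ¬ E.mem i) :
    ∀ (N : ℕ) {u : Ω.V} (p : Ω.graph.Walk u i), p.length ≤ N → p.IsPath → E.mem u →
      V.transpW p ⊤ ≤ V.VEplus hT E i := by
  intro N
  induction N with
  | zero =>
      intro u p hlen hp hu
      have := SimpleGraph.Walk.eq_of_length_eq_zero (Nat.le_zero.mp hlen)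
      exact absurd (this ▸ hu) hi
  | succ N ih =>
      intro u p hlen hp hu
      by_cases hval : ∀ x ∈ p.support, E.mem x → x = u
      · rw [QRep.VEplus, if_neg hi]
        have hpe := path_eq_treeWalk hT p hp
        refine le_trans ?_ (le_iSup₂ (f := fun j _ => V.transportTo hT j ⊤ i) u
          ⟨hu, by rw [← hpe]; exact hval⟩)
        rw [QRep.transportTo, ← hpe]
      · push_neg at hval
        obtain ⟨x, hx, hxE, hxu⟩ := hval
        have hdrop := hp.dropUntil hx
        have hlen2 : (p.dropUntil x hx).length ≤ N := by
          have hspec : (p.takeUntil x hx).length + (p.dropUntil x hx).length = p.length := by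
            rw [← SimpleGraph.Walk.length_append, SimpleGraph.Walk.take_spec]
          have htake : (p.takeUntil x hx).length ≠ 0 := by
            intro h0
            exact hxu (SimpleGraph.Walk.eq_of_length_eq_zero h0).symm
          omega
        calc V.transpW p ⊤
            = V.transpW (p.dropUntil x hx) (V.transpW (p.takeUntil x hx) ⊤) := by
              rw [← transpW_append, SimpleGraph.Walk.take_spec]
          _ ≤ V.transpW (p.dropUntil x hx) ⊤ := transpW_mono V _ le_top
          _ ≤ _ := ih (p.dropUntil x hx) hlen2 hdrop hxE

lemma transp_le_VEplus' (hS : Ω.Simple) (hT : Ω.graph.IsTree) (V : QRep Ω 𝔽)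
    (E : Qvr.VirtArrow Ω) {i : Ω.V} (hi : ¬ E.mem i) {u : Ω.V} (p : Ω.graph.Walk u i)
    (hp : p.IsPath) (hu : E.mem u) : V.transpW p ⊤ ≤ V.VEplus hT E i :=
  transp_le_VEplus hS hT V E hi p.length p le_rfl hp hu
lemma transpW_copy_top (V : QRep Ω 𝔽) {u v u' v' : Ω.V} (hu : u = u') (hv : v = v')
    (p : Ω.graph.Walk u v) (h : V.transpW p ⊤ = ⊤) : V.transpW (p.copy hu hv) ⊤ = ⊤ := by
  subst hu; subst hv
  rw [SimpleGraph.Walk.copy_rfl_rfl]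
  exact h

lemma cast_sub_le_of_add_eq {l : ℕ∞} {d m : ℕ} {L : ℕ∞} (hlen : l + (d : ℕ∞) = L)
    (hm : (m : ℕ∞) ≤ L) : ((m - d : ℕ) : ℕ∞) ≤ l := by
  induction l using ENat.recTopCoe with
  | top => exact le_top
  | coe l =>
      rw [← hlen, ← Nat.cast_add] at hm
      have := Nat.cast_le.mp hm
      exact Nat.cast_le.mpr (by omega)

lemma VEplus_tail_le (hS : Ω.Simple) (hT : Ω.graph.IsTree) (V : QRep Ω 𝔽)
    {E'' E : Qvr.VirtArrow Ω} (ht : E''.IsTail E) (i : Ω.V) :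
    V.VEplus hT E'' i ≤ V.VEplus hT E i := by
  by_cases hiE : E.mem i
  · conv_rhs => rw [QRep.VEplus, if_pos hiE]
    exact le_top
  · have hiE'' : ¬E''.mem i := fun h => hiE (tail_mem_subset ht h)
    rw [QRep.VEplus, if_neg hiE'']
    refine iSup₂_le fun j hj => ?_
    exact transp_le_VEplus' hS hT V E hiE _ (treeWalk_isPath hT j i)
      (tail_mem_subset ht hj.1)

lemma VEplus_tail_ge (hS : Ω.Simple) (hT : Ω.graph.IsTree) (V : QRep Ω 𝔽)
    {E'' E : Qvr.VirtArrow Ω} (ht : E''.IsTail E) (i : Ω.V) :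
    V.VEplus hT E i ≤ V.VEplus hT E'' i := by
  obtain ⟨d, hv, -, hlen⟩ := id ht
  -- membership in the tail in terms of positions on `E`
  have hpos : ∀ k : ℕ, (k : ℕ∞) ≤ E.toJourney.len → E''.mem (E.toJourney.vtx k) → d ≤ k := by
    intro k hk ⟨a, ha, hva⟩
    have hva' : E.toJourney.vtx (a + d) = E.toJourney.vtx k := by
      rw [← hv a ha, hva]
    have hle : ((a + d : ℕ) : ℕ∞) ≤ E.toJourney.len := by
      rw [← hlen]; push_cast; exact add_le_add ha le_rfl
    have := vtx_inj E hle hk hva'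
    omega
  have hmemd : ∀ k : ℕ, d ≤ k → (k : ℕ∞) ≤ E.toJourney.len → E''.mem (E.toJourney.vtx k) := by
    intro k hdk hk
    refine ⟨k - d, cast_sub_le_of_add_eq hlen hk, ?_⟩
    rw [hv (k - d) (cast_sub_le_of_add_eq hlen hk)]
    congr 1
    omega
  have hdlen : ((d : ℕ) : ℕ∞) ≤ E.toJourney.len := by
    rw [← hlen]; exact le_add_self
  by_cases hiE'' : E''.mem i
  · conv_rhs => rw [QRep.VEplus, if_pos hiE'']
    exact le_top
  by_cases hiE : E.mem i
  · -- `i` lies on `E` but not on the tail: backwards transport of ⊤ along `E` is ⊤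
    obtain ⟨m, hm, rfl⟩ := hiE
    have hmd : m < d := by
      rcases Nat.lt_or_ge m d with h | h
      · exact h
      · exact absurd (hmemd m h hm) hiE''
    have hq0 : ((m + (d - m) : ℕ) : ℕ∞) ≤ E.toJourney.len := by
      rw [(by omega : m + (d - m) = d)]; exact hdlen
    let q : Ω.graph.Walk (E.toJourney.vtx d) (E.toJourney.vtx m) :=
      (jBwd hS E m (d - m) hq0).copy (by rw [(by omega : m + (d - m) = d)]) rfl
    have hqpath : q.IsPath := by
      simp only [q, SimpleGraph.Walk.isPath_copy]
      exact jBwd_isPath hS E m _ _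
    have hqsupp : ∀ x ∈ q.support, ∃ k, m ≤ k ∧ k ≤ d ∧ E.toJourney.vtx k = x := by
      intro x hx
      simp only [q, SimpleGraph.Walk.support_copy] at hx
      obtain ⟨k, h1, h2, h3⟩ := jBwd_support hS E m (d - m) _ x hx
      exact ⟨k, h1, by omega, h3⟩
    have hqtop : V.transpW q ⊤ = ⊤ :=
      transpW_copy_top V _ _ _ (jBwd_transp_top hS V E m _ _)
    conv_rhs => rw [QRep.VEplus, if_neg hiE'']
    have hvalid : ∀ x ∈ (Qvr.treeWalk hT (E.toJourney.vtx d) (E.toJourney.vtx m)).support,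
        E''.mem x → x = E.toJourney.vtx d := by
      rw [← path_eq_treeWalk hT q hqpath]
      intro x hx hxE''
      obtain ⟨k, h1, h2, rfl⟩ := hqsupp x hx
      have hk : (k : ℕ∞) ≤ E.toJourney.len := le_trans (Nat.cast_le.2 h2) hdlen
      have := hpos k hk hxE''
      congr 1
      omega
    refine le_trans ?_ (le_iSup₂ (f := fun j _ => V.transportTo hT j ⊤ (E.toJourney.vtx m))
      (E.toJourney.vtx d) ⟨hmemd d le_rfl hdlen, hvalid⟩)
    rw [QRep.transportTo, ← path_eq_treeWalk hT q hqpath, hqtop]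
    exact le_top
  · -- `i` is off `E`
    conv_lhs => rw [QRep.VEplus, if_neg hiE]
    conv_rhs => rw [QRep.VEplus, if_neg hiE'']
    refine iSup₂_le fun j hj => ?_
    obtain ⟨⟨n, hn, rfl⟩, hvalj⟩ := hj
    rcases Nat.lt_or_ge n d with hnd | hnd
    · -- combine the backwards walk from `vtx d` to `vtx n` with the tree walk to `i`
      have hq0 : ((n + (d - n) : ℕ) : ℕ∞) ≤ E.toJourney.len := by
        rw [(by omega : n + (d - n) = d)]; exact hdlen
      let q : Ω.graph.Walk (E.toJourney.vtx d) (E.toJourney.vtx n) :=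
        (jBwd hS E n (d - n) hq0).copy (by rw [(by omega : n + (d - n) = d)]) rfl
      have hqpath : q.IsPath := by
        simp only [q, SimpleGraph.Walk.isPath_copy]
        exact jBwd_isPath hS E n _ _
      have hqsupp : ∀ x ∈ q.support, ∃ k, n ≤ k ∧ k ≤ d ∧ E.toJourney.vtx k = x := by
        intro x hx
        simp only [q, SimpleGraph.Walk.support_copy] at hx
        obtain ⟨k, h1, h2, h3⟩ := jBwd_support hS E n (d - n) _ x hx
        exact ⟨k, h1, by omega, h3⟩
      have hqtop : V.transpW q ⊤ = ⊤ :=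
        transpW_copy_top V _ _ _ (jBwd_transp_top hS V E n _ _)
      let w := Qvr.treeWalk hT (E.toJourney.vtx n) i
      have hrpath : (q.append w).IsPath := by
        refine isPath_append hqpath (treeWalk_isPath hT _ _) ?_
        intro x hxq hxw
        obtain ⟨k, h1, h2, rfl⟩ := hqsupp x hxq
        exact hvalj _ hxw (mem_vtx E (le_trans (Nat.cast_le.2 h2) hdlen))
      have hvalid : ∀ x ∈ (Qvr.treeWalk hT (E.toJourney.vtx d) i).support,
          E''.mem x → x = E.toJourney.vtx d := by
        have hreq := path_eq_treeWalk hT (q.append w) hrpath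
        rw [← hreq]
        intro x hx hxE''
        rw [SimpleGraph.Walk.mem_support_append_iff] at hx
        rcases hx with hx | hx
        · obtain ⟨k, h1, h2, rfl⟩ := hqsupp x hx
          have hk : (k : ℕ∞) ≤ E.toJourney.len := le_trans (Nat.cast_le.2 h2) hdlen
          have := hpos k hk hxE''
          congr 1
          omega
        · have hxE : E.mem x := tail_mem_subset ht hxE''
          have := hvalj x hx hxE
          subst this
          have := hpos n hn hxE''
          omega
      refine le_trans ?_ (le_iSup₂ (f := fun j _ => V.transportTo hT j ⊤ i)
        (E.toJourney.vtx d) ⟨hmemd d le_rfl hdlen, hvalid⟩)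
      simp only [QRep.transportTo]
      rw [← path_eq_treeWalk hT (q.append w) hrpath, transpW_append, hqtop]
    · -- `vtx n` already lies on the tail
      have hvalid : ∀ x ∈ (Qvr.treeWalk hT (E.toJourney.vtx n) i).support,
          E''.mem x → x = E.toJourney.vtx n := fun x hx hxE'' =>
        hvalj x hx (tail_mem_subset ht hxE'')
      exact le_iSup₂ (f := fun j _ => V.transportTo hT j ⊤ i) (E.toJourney.vtx n)
        ⟨hmemd n hnd hn, hvalid⟩

lemma VEplus_equiv_eq (hS : Ω.Simple) (hT : Ω.graph.IsTree) (V : QRep Ω 𝔽)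
    {E E' : Qvr.VirtArrow Ω} (h : E.Equiv E') (i : Ω.V) :
    V.VEplus hT E i = V.VEplus hT E' i := by
  obtain ⟨E'', h1, h2⟩ := h
  exact le_antisymm ((VEplus_tail_ge hS hT V h1 i).trans (VEplus_tail_le hS hT V h2 i))
    ((VEplus_tail_ge hS hT V h2 i).trans (VEplus_tail_le hS hT V h1 i))
lemma arrow_front_of_not_behind (hS : Ω.Simple) (hT : Ω.graph.IsTree) {b e : Ω.A}
    (hne : b ≠ e) (hnb : ¬ Ω.ABehind b e) :
    Ω.InFront e (Ω.s b) ∧ Ω.InFront e (Ω.t b) := by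
  have hadj' : (Ω.graph.deleteEdges {s(Ω.s e, Ω.t e)}).Adj (Ω.s b) (Ω.t b) := by
    rw [SimpleGraph.deleteEdges_adj]
    exact ⟨arrowAdj hS b, by simpa using fun h => hne (arrow_eq_of_sym2 hS h)⟩
  rcases behind_or_infront hT e (Ω.s b) with hb | hf
  · exact absurd ⟨hb, behind_trans hb hadj'.reachable⟩ hnb
  · exact ⟨hf, infront_trans hf hadj'.reachable⟩

lemma virt_reach (hS : Ω.Simple) (E : Qvr.VirtArrow Ω) {e : Ω.A}
    (hse : ¬E.mem (Ω.s e)) {m n : ℕ} (hm : (m : ℕ∞) ≤ E.toJourney.len)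
    (hn : (n : ℕ∞) ≤ E.toJourney.len) :
    (Ω.graph.deleteEdges {s(Ω.s e, Ω.t e)}).Reachable (E.toJourney.vtx m)
      (E.toJourney.vtx n) := by
  have aux : ∀ (a k : ℕ), ((a + k : ℕ) : ℕ∞) ≤ E.toJourney.len →
      (Ω.graph.deleteEdges {s(Ω.s e, Ω.t e)}).Reachable (E.toJourney.vtx a)
        (E.toJourney.vtx (a + k)) := by
    intro a k
    induction k with
    | zero => exact fun _ => SimpleGraph.Reachable.refl _
    | succ k ih =>
        intro h
        have hk : ((a + k : ℕ) : ℕ∞) ≤ E.toJourney.len :=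
          le_trans (Nat.cast_le.2 (by omega)) h
        have hlt : ((a + k : ℕ) : ℕ∞) < E.toJourney.len :=
          lt_of_lt_of_le (Nat.cast_lt.2 (Nat.add_lt_add_left k.lt_succ_self a)) h
        refine (ih hk).trans (SimpleGraph.Adj.reachable ?_)
        rw [SimpleGraph.deleteEdges_adj]
        refine ⟨jadj hS E hlt, ?_⟩
        simp only [Set.mem_singleton_iff]
        intro hcon
        rw [Sym2.eq_iff] at hcon
        rcases hcon with ⟨h1, h2⟩ | ⟨h1, h2⟩
        · exact hse ⟨a + k, hk, h1⟩
        · exact hse ⟨a + k + 1, h, h2⟩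
  rcases Nat.le_total m n with h | h
  · have := aux m (n - m) (by rw [(by omega : m + (n - m) = n)]; exact hn)
    rw [(by omega : m + (n - m) = n)] at this
    exact this
  · have := aux n (m - n) (by rw [(by omega : n + (m - n) = m)]; exact hm)
    rw [(by omega : n + (m - n) = m)] at this
    exact this.symm

/-- If `t e` lies on `E` but `s e` does not, then `V^{E,+}` at `s e` is everything. -/
lemma VEplus_top_of_mem_te (hS : Ω.Simple) (hT : Ω.graph.IsTree) (V : QRep Ω 𝔽)
    {e : Ω.A} (E : Qvr.VirtArrow Ω) (hte : E.mem (Ω.t e)) (hse : ¬E.mem (Ω.s e)) :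
    V.VEplus hT E (Ω.s e) = ⊤ := by
  have hadj := arrowAdj hS e
  let p : Ω.graph.Walk (Ω.t e) (Ω.s e) := SimpleGraph.Walk.cons hadj.symm SimpleGraph.Walk.nil
  have hppath : p.IsPath := by
    rw [SimpleGraph.Walk.cons_isPath_iff]
    exact ⟨SimpleGraph.Walk.IsPath.nil, by simp [hadj.ne']⟩
  have hptop : V.transpW p ⊤ = ⊤ := by
    show V.transpW SimpleGraph.Walk.nil (V.stepT hadj.symm ⊤) = ⊤
    rw [stepT_top hS V hadj.symm e rfl rfl]
    rfl
  rw [QRep.VEplus, if_neg hse, eq_top_iff]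
  refine le_trans ?_ (le_iSup₂ (f := fun j _ => V.transportTo hT j ⊤ (Ω.s e)) (Ω.t e)
    ⟨hte, ?_⟩)
  · rw [QRep.transportTo, ← path_eq_treeWalk hT p hppath, hptop]
  · rw [← path_eq_treeWalk hT p hppath]
    intro x hx hxE
    simp only [p, SimpleGraph.Walk.support_cons, SimpleGraph.Walk.support_nil,
      List.mem_cons, List.mem_singleton] at hx
    rcases hx with rfl | rfl | hx
    · rfl
    · exact absurd hxE hse
    · exact absurd hx (by simp)

/-- Transport from a vertex of `E` behind `e`, valid for `t e`, lands inside `V^{E,+}`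
at `s e`. -/
lemma transp_se_le_VEplus (hS : Ω.Simple) (hT : Ω.graph.IsTree) (V : QRep Ω 𝔽)
    {e : Ω.A} (E : Qvr.VirtArrow Ω) {j : Ω.V} (hj : E.mem j) (hjb : Ω.Behind e j)
    (hv : ∀ x ∈ (Qvr.treeWalk hT j (Ω.t e)).support, E.mem x → x = j) :
    V.transportTo hT j ⊤ (Ω.s e) ≤ V.VEplus hT E (Ω.s e) := by
  by_cases hse : E.mem (Ω.s e)
  · rw [QRep.VEplus, if_pos hse]; exact le_top
  · rw [QRep.VEplus, if_neg hse]
    refine le_iSup₂ (f := fun j _ => V.transportTo hT j ⊤ (Ω.s e)) j ⟨hj, ?_⟩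
    intro x hx hxE
    refine hv x ?_ hxE
    rw [treeWalk_concat_behind hS hT hjb, SimpleGraph.Walk.support_concat]
    exact List.mem_append_left _ hx

/-- For a virtual arrow all of whose vertices lie behind `e`, the subspace `V^{E,+}` at
`t e` is the image of the one at `s e`. -/
lemma VEplus_behind_le (hS : Ω.Simple) (hT : Ω.graph.IsTree) (V : QRep Ω 𝔽)
    {e : Ω.A} (E : Qvr.VirtArrow Ω) (hbe : ∀ i, E.mem i → Ω.Behind e i)
    (hte : ¬E.mem (Ω.t e)) :
    V.VEplus hT E (Ω.t e) ≤ (V.VEplus hT E (Ω.s e)).map (V.f e) := by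
  rw [QRep.VEplus, if_neg hte]
  refine iSup₂_le fun j hj => ?_
  rw [transportTo_te hS hT V (hbe j hj.1) ⊤]
  exact Submodule.map_mono (transp_se_le_VEplus hS hT V E hj.1 (hbe j hj.1) hj.2)

/-- The key step for virtual boundary arrows that are not behind `e`. -/
lemma virt_front_case (hS : Ω.Simple) (hT : Ω.graph.IsTree) (V : QRep Ω 𝔽)
    {e : Ω.A} (E : Qvr.VirtArrow Ω) {x : V.Vtx (Ω.s e)} {y : V.Vtx (Ω.t e)}
    (hfx : V.f e x = y) (hy0 : y ≠ 0) (hyE : y ∈ V.VEplus hT E (Ω.t e))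
    (hnb : ¬ ∀ i, E.mem i → Ω.Behind e i) : x ∈ V.VEplus hT E (Ω.s e) := by
  by_cases hsem : E.mem (Ω.s e)
  · rw [QRep.VEplus, if_pos hsem]; exact Submodule.mem_top
  by_cases htem : E.mem (Ω.t e)
  · rw [VEplus_top_of_mem_te hS hT V E htem hsem]; exact Submodule.mem_top
  -- all vertices of `E` are in front of `e`
  push_neg at hnb
  obtain ⟨i₀, hi₀m, hi₀nb⟩ := hnb
  have hi₀f : Ω.InFront e i₀ := (behind_or_infront hT e i₀).resolve_left hi₀nb
  have hfrontall : ∀ j, E.mem j → Ω.InFront e j := by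
    rintro j ⟨nj, hnj, rfl⟩
    obtain ⟨n₀, hn₀, rfl⟩ := hi₀m
    exact infront_trans hi₀f (virt_reach hS E hsem hn₀ hnj)
  by_cases hex : ∃ j, E.mem j ∧ ∀ z ∈ (Qvr.treeWalk hT j (Ω.t e)).support, E.mem z → z = j
  · obtain ⟨j, hjm, hjv⟩ := hex
    have hcol := VEplus_eq hS hT V E htem hjm hjv
    rw [hcol] at hyE
    have hx : x ∈ V.transportTo hT j ⊤ (Ω.s e) := by
      rw [transportTo_se hS hT V (hfrontall j hjm) ⊤, Submodule.mem_comap, hfx]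
      exact hyE
    have hle : V.transportTo hT j ⊤ (Ω.s e) ≤ V.VEplus hT E (Ω.s e) := by
      rw [QRep.VEplus, if_neg hsem]
      refine le_iSup₂ (f := fun j _ => V.transportTo hT j ⊤ (Ω.s e)) j ⟨hjm, ?_⟩
      intro z hz hzE
      rw [treeWalk_concat_infront hS hT (hfrontall j hjm), SimpleGraph.Walk.support_concat,
        List.mem_append] at hz
      rcases hz with hz | hz
      · exact hjv z hz hzE
      · rw [List.mem_singleton] at hz
        exact absurd (hz ▸ hzE) hsem
    exact hle hx
  · have hbot : V.VEplus hT E (Ω.t e) ≤ ⊥ := by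
      rw [QRep.VEplus, if_neg htem]
      exact iSup₂_le fun j hj => absurd ⟨j, hj.1, hj.2⟩ hex
    rw [le_bot_iff] at hbot
    rw [hbot, Submodule.mem_bot] at hyE
    exact absurd hyE hy0
variable {S : Set Ω.V}

lemma Vplus_behind_eq (hS : Ω.Simple) (hT : Ω.graph.IsTree) (hconn : Ω.ConnSub S)
    (V : QRep Ω 𝔽) {e b : Ω.A} (hbIn : b ∈ Ω.InBdry S) (hse : Ω.s e ∈ S)
    (hte : Ω.t e ∈ S) (hbB : Ω.Behind e (Ω.t b)) :
    V.Vplus hT b (Ω.t e) = (V.Vplus hT b (Ω.s e)).map (V.f e) := by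
  have h1 : ¬ Ω.Behind b (Ω.t e) := fun h =>
    not_behind_and_infront hS hT b _ ⟨h, infront_of_inBdry hconn hbIn hte⟩
  have h2 : ¬ Ω.Behind b (Ω.s e) := fun h =>
    not_behind_and_infront hS hT b _ ⟨h, infront_of_inBdry hconn hbIn hse⟩
  simp only [QRep.Vplus, if_neg h1, if_neg h2]
  exact transportTo_te hS hT V hbB ⊤

lemma Vminus_behind_eq (hS : Ω.Simple) (hT : Ω.graph.IsTree) (hconn : Ω.ConnSub S)
    (V : QRep Ω 𝔽) {e b : Ω.A} (hbOut : b ∈ Ω.OutBdry S) (hse : Ω.s e ∈ S)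
    (hte : Ω.t e ∈ S) (hbB : Ω.Behind e (Ω.t b)) :
    V.Vminus hT b (Ω.t e) = (V.Vminus hT b (Ω.s e)).map (V.f e) := by
  have h1 : ¬ Ω.InFront b (Ω.t e) := fun h =>
    not_behind_and_infront hS hT b _ ⟨behind_of_outBdry hconn hbOut hte, h⟩
  have h2 : ¬ Ω.InFront b (Ω.s e) := fun h =>
    not_behind_and_infront hS hT b _ ⟨behind_of_outBdry hconn hbOut hse, h⟩
  simp only [QRep.Vminus, if_neg h1, if_neg h2]
  exact transportTo_te hS hT V hbB ⊥

lemma Vplus_front_comap (hS : Ω.Simple) (hT : Ω.graph.IsTree) (hconn : Ω.ConnSub S)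
    (V : QRep Ω 𝔽) {e b : Ω.A} (hbIn : b ∈ Ω.InBdry S) (hse : Ω.s e ∈ S)
    (hte : Ω.t e ∈ S) (hbF : Ω.InFront e (Ω.t b)) :
    V.Vplus hT b (Ω.s e) = (V.Vplus hT b (Ω.t e)).comap (V.f e) := by
  have h1 : ¬ Ω.Behind b (Ω.t e) := fun h =>
    not_behind_and_infront hS hT b _ ⟨h, infront_of_inBdry hconn hbIn hte⟩
  have h2 : ¬ Ω.Behind b (Ω.s e) := fun h =>
    not_behind_and_infront hS hT b _ ⟨h, infront_of_inBdry hconn hbIn hse⟩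
  simp only [QRep.Vplus, if_neg h1, if_neg h2]
  exact transportTo_se hS hT V hbF ⊤

lemma Vminus_front_comap (hS : Ω.Simple) (hT : Ω.graph.IsTree) (hconn : Ω.ConnSub S)
    (V : QRep Ω 𝔽) {e b : Ω.A} (hbOut : b ∈ Ω.OutBdry S) (hse : Ω.s e ∈ S)
    (hte : Ω.t e ∈ S) (hbF : Ω.InFront e (Ω.t b)) :
    V.Vminus hT b (Ω.s e) = (V.Vminus hT b (Ω.t e)).comap (V.f e) := by
  have h1 : ¬ Ω.InFront b (Ω.t e) := fun h =>
    not_behind_and_infront hS hT b _ ⟨behind_of_outBdry hconn hbOut hte, h⟩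
  have h2 : ¬ Ω.InFront b (Ω.s e) := fun h =>
    not_behind_and_infront hS hT b _ ⟨behind_of_outBdry hconn hbOut hse, h⟩
  simp only [QRep.Vminus, if_neg h1, if_neg h2]
  exact transportTo_se hS hT V hbF ⊥
end Aux
/-- Let `Ω` be an eventually outward finitely branched tree quiver, `V` a
representation of `Ω` over a field `𝔽`, and `α` a connected full subquiver.  If `e` is an
arrow contained in `α` with exactly one literal or virtual boundary arrow of `α` behind it,
then the map `f e` restricted to the subrepresentation `F^α` is surjective from
`F^α (s e)` onto `F^α (t e)`. -/
theorem stmt6 (Ω : Qvr) (hS : Ω.Simple) (hT : Ω.graph.IsTree)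
    (hEO : Ω.EventuallyOutward) (hFB : Ω.FinitelyBranched)
    {𝔽 : Type} [Field 𝔽] (V : QRep Ω 𝔽)
    (S : Set Ω.V) (hconn : Ω.ConnSub S)
    (e : Ω.A) (hse : Ω.s e ∈ S) (hte : Ω.t e ∈ S)
    (hone : Ω.ExactlyOneBdryBehind S e) :
    ∀ y ∈ V.Fsub hT S (Ω.t e), ∃ x ∈ V.Fsub hT S (Ω.s e), V.f e x = y := by
  intro y hy
  by_cases hy0 : y = 0
  · exact ⟨0, Submodule.zero_mem _, by rw [hy0]; exact map_zero _⟩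
  rw [QRep.Fsub, Submodule.mem_inf, Submodule.mem_inf] at hy
  obtain ⟨⟨hyA, hyB⟩, hyC⟩ := hy
  simp only [Submodule.mem_iInf] at hyA hyB hyC
  -- helpers for the "in front" constraints
  have frontIn : ∀ (x : V.Vtx (Ω.s e)), V.f e x = y → ∀ c ∈ Ω.InBdry S,
      ¬ Ω.ABehind c e → x ∈ V.Vplus hT c (Ω.s e) := by
    intro x hfx c hcIn hcB
    have hne : c ≠ e := fun h => hcIn.2 (by rw [h]; exact hse)
    have hfront := (arrow_front_of_not_behind hS hT hne hcB).2
    rw [Vplus_front_comap hS hT hconn V hcIn hse hte hfront, Submodule.mem_comap, hfx]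
    exact hyA c hcIn
  have frontOut : ∀ (x : V.Vtx (Ω.s e)), V.f e x = y → ∀ c ∈ Ω.OutBdry S,
      ¬ Ω.ABehind c e → x ∈ V.Vminus hT c (Ω.s e) := by
    intro x hfx c hcOut hcB
    have hne : c ≠ e := fun h => hcOut.2 (by rw [h]; exact hte)
    have hfront := (arrow_front_of_not_behind hS hT hne hcB).2
    rw [Vminus_front_comap hS hT hconn V hcOut hse hte hfront, Submodule.mem_comap, hfx]
    exact hyB c hcOut
  rcases hone with ⟨⟨b, hbmem, hbuniq⟩, hVempty⟩ | ⟨hLempty, hVne, hEquiv⟩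
  · -- exactly one literal boundary arrow behind `e`, no virtual ones
    obtain ⟨hbU, hbB⟩ := hbmem
    have hvirt : ∀ (x : V.Vtx (Ω.s e)), V.f e x = y → ∀ E ∈ Ω.VirtBdry S,
        x ∈ V.VEplus hT E (Ω.s e) := by
      intro x hfx E hEv
      by_cases hEb : ∀ i, E.mem i → Ω.Behind e i
      · exact absurd (show E ∈ Ω.VBdryBehind S e from ⟨hEv, hEb⟩)
          (by rw [hVempty]; exact Set.notMem_empty E)
      · exact virt_front_case hS hT V E hfx hy0 (hyC E hEv) hEb
    rcases hbU with hbIn | hbOut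
    · -- the unique behind boundary arrow points towards `S`
      have hmap := Vplus_behind_eq hS hT hconn V hbIn hse hte hbB.2
      have hyW : y ∈ (V.Vplus hT b (Ω.s e)).map (V.f e) := by
        rw [← hmap]; exact hyA b hbIn
      obtain ⟨x, hxW, hfx⟩ := Submodule.mem_map.mp hyW
      refine ⟨x, ?_, hfx⟩
      rw [QRep.Fsub]
      refine Submodule.mem_inf.mpr ⟨Submodule.mem_inf.mpr ⟨?_, ?_⟩, ?_⟩ <;>
        simp only [Submodule.mem_iInf]
      · intro c hcIn
        by_cases hcB : Ω.ABehind c e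
        · have hceq : c = b := hbuniq c ⟨Or.inl hcIn, hcB⟩
          rw [hceq]
          exact hxW
        · exact frontIn x hfx c hcIn hcB
      · intro c hcOut
        by_cases hcB : Ω.ABehind c e
        · have hceq : c = b := hbuniq c ⟨Or.inr hcOut, hcB⟩
          rw [hceq] at hcOut
          exact absurd hbIn.1 hcOut.2
        · exact frontOut x hfx c hcOut hcB
      · intro E hEv
        exact hvirt x hfx E hEv
    · -- the unique behind boundary arrow points away from `S`
      have hmap := Vminus_behind_eq hS hT hconn V hbOut hse hte hbB.2
      have hyW : y ∈ (V.Vminus hT b (Ω.s e)).map (V.f e) := by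
        rw [← hmap]; exact hyB b hbOut
      obtain ⟨x, hxW, hfx⟩ := Submodule.mem_map.mp hyW
      refine ⟨x, ?_, hfx⟩
      rw [QRep.Fsub]
      refine Submodule.mem_inf.mpr ⟨Submodule.mem_inf.mpr ⟨?_, ?_⟩, ?_⟩ <;>
        simp only [Submodule.mem_iInf]
      · intro c hcIn
        by_cases hcB : Ω.ABehind c e
        · have hceq : c = b := hbuniq c ⟨Or.inl hcIn, hcB⟩
          rw [hceq] at hcIn
          exact absurd hcIn.1 hbOut.2
        · exact frontIn x hfx c hcIn hcB
      · intro c hcOut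
        by_cases hcB : Ω.ABehind c e
        · have hceq : c = b := hbuniq c ⟨Or.inr hcOut, hcB⟩
          rw [hceq]
          exact hxW
        · exact frontOut x hfx c hcOut hcB
      · intro E hEv
        exact hvirt x hfx E hEv
  · -- only virtual boundary arrows behind `e`, all equivalent
    obtain ⟨E₀, hE₀⟩ := hVne
    have hte₀ : ¬E₀.mem (Ω.t e) := fun h => not_behind_t hS hT e (hE₀.2 _ h)
    have hyW : y ∈ (V.VEplus hT E₀ (Ω.s e)).map (V.f e) :=
      VEplus_behind_le hS hT V E₀ hE₀.2 hte₀ (hyC E₀ hE₀.1)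
    obtain ⟨x, hxW, hfx⟩ := Submodule.mem_map.mp hyW
    refine ⟨x, ?_, hfx⟩
    rw [QRep.Fsub]
    refine Submodule.mem_inf.mpr ⟨Submodule.mem_inf.mpr ⟨?_, ?_⟩, ?_⟩ <;>
      simp only [Submodule.mem_iInf]
    · intro c hcIn
      by_cases hcB : Ω.ABehind c e
      · exact absurd (show c ∈ Ω.LBdryBehind S e from ⟨Or.inl hcIn, hcB⟩)
          (by rw [hLempty]; exact Set.notMem_empty c)
      · exact frontIn x hfx c hcIn hcB
    · intro c hcOut
      by_cases hcB : Ω.ABehind c e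
      · exact absurd (show c ∈ Ω.LBdryBehind S e from ⟨Or.inr hcOut, hcB⟩)
          (by rw [hLempty]; exact Set.notMem_empty c)
      · exact frontOut x hfx c hcOut hcB
    · intro E hEv
      by_cases hEb : ∀ i, E.mem i → Ω.Behind e i
      · rw [VEplus_equiv_eq hS hT V (hEquiv E ⟨hEv, hEb⟩ E₀ hE₀)]
        exact hxW
      · exact virt_front_case hS hT V E hfx hy0 (hyC E hEv) hEb
end

section
/- Let R be a ring and M an R-module. If (F, P) is a distributive poset filtration of M, then every almost gradation C of F is independent: whenever Q ⊆ P is finite and c_q ∈ C^q for each q ∈ Q with Σ_{q ∈ Q} c_q = 0, then c_q = 0 for all q ∈ Q. -/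
/-- Let `R` be a ring and `M` an `R`-module. If `(F, P)` is a distributive
poset filtration of `M`, then every almost gradation `C` of `F` is independent: whenever
`Q ⊆ P` is finite and `c q ∈ C q` for each `q ∈ Q` with `∑_{q ∈ Q} c q = 0`, then `c q = 0`
for all `q ∈ Q`.

Here a poset filtration is an order-preserving map `F : P → Submodule R M`; we write
`F^{<p} = ⨆ (q < p), F q` (the sum of the submodules `F q` for `q < p`).  `(F, P)` is
distributive if for every finite `Q ⊆ P` and every `p` maximal in `Q`,
`F p ⊓ Σ_{q ∈ Q \ {p}} F q ⊆ F^{<p}`.  An almost gradation is `C : P → Submodule R M` with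
`F p = F^{<p} ⊕ C p` (internal direct sum) for every `p`. -/
theorem stmt13
    {R : Type*} [Ring R] {M : Type*} [AddCommGroup M] [Module R M]
    {P : Type*} [PartialOrder P]
    (F : P → Submodule R M) (hF : Monotone F)
    (hdist : ∀ Q : Finset P, ∀ p ∈ Q, (∀ q ∈ Q, p ≤ q → q = p) →
      F p ⊓ (⨆ q ∈ Q, ⨆ (_ : q ≠ p), F q) ≤ ⨆ q : P, ⨆ (_ : q < p), F q)
    (C : P → Submodule R M)
    (hC : ∀ p : P, Disjoint (⨆ q : P, ⨆ (_ : q < p), F q) (C p) ∧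
      (⨆ q : P, ⨆ (_ : q < p), F q) ⊔ C p = F p) :
    ∀ Q : Finset P, ∀ c : P → M, (∀ q ∈ Q, c q ∈ C q) → (∑ q ∈ Q, c q) = 0 →
      ∀ q ∈ Q, c q = 0 := by
  classical
  intro Q
  induction Q using Finset.strongInduction with
  | _ Q ih =>
    intro c hc hsum q hq
    obtain ⟨p, hp, hpmax⟩ := Q.exists_maximal ⟨q, hq⟩
    have hmax : ∀ r ∈ Q, p ≤ r → r = p := by
      intro r hr hle
      by_contra hne
      exact hne (le_antisymm (hpmax hr hle) hle)
    have hCF : ∀ r, C r ≤ F r := fun r => le_trans le_sup_right (le_of_eq (hC r).2)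
    have hsum' : ∑ r ∈ Q.erase p, c r = - c p := by
      have h := Finset.add_sum_erase Q c hp
      rw [hsum] at h
      exact eq_neg_of_add_eq_zero_right h
    have hcp0 : c p = 0 := by
      have hmem : c p ∈ (⨆ r ∈ Q, ⨆ (_ : r ≠ p), F r) := by
        have : - c p ∈ (⨆ r ∈ Q, ⨆ (_ : r ≠ p), F r) := by
          rw [← hsum']
          refine Submodule.sum_mem _ (fun r hr => ?_)
          have hr' := Finset.mem_erase.mp hr
          exact Submodule.mem_iSup_of_mem r (Submodule.mem_iSup_of_mem hr'.2
            (Submodule.mem_iSup_of_mem hr'.1 (hCF r (hc r hr'.2))))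
        simpa using neg_mem this
      have hmemF : c p ∈ F p := hCF p (hc p hp)
      have hlt : c p ∈ (⨆ r : P, ⨆ (_ : r < p), F r) :=
        hdist Q p hp hmax ⟨hmemF, hmem⟩
      exact Submodule.disjoint_def.mp (hC p).1 _ hlt (hc p hp)
    have hsum0 : ∑ r ∈ Q.erase p, c r = 0 := by rw [hsum', hcp0, neg_zero]
    have herase := ih (Q.erase p) (Finset.erase_ssubset hp) c
      (fun r hr => hc r (Finset.mem_of_mem_erase hr)) hsum0
    by_cases hqp : q = p
    · rw [hqp]; exact hcp0
    · exact herase q (Finset.mem_erase.mpr ⟨hqp, hq⟩)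
end

section
/- Let R be a ring, M an R-module, and (E, I), (F, J) linear filtrations of M. Then for each (i,j) ∈ I × J, (E ∩ F)^{<(i,j)} = (E^i ∩ F^{<j}) + (E^{<i} ∩ F^j), and the intersection filtration (E ∩ F, I × J) is distributive. -/
/-!
Both parts are lattice-theoretic: they hold in any modular, compactly generated lattice, such as
`Submodule R M`. For the formula, an index `(i', j') < (i, j)` has either `j' < j` or `j' = j`
and `i' < i`, which gives `≤`; for `≥`, compact generation lets `E i ⊓ -` pass through the
directed supremum `⨆ j' < j, F j'`. For distributivity, maximality of `p` means every other `q`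
has `q.1 < p.1` or `q.2 < p.2`, so the sum over `Q \ {p}` lies below `E^{<p.1} ⊔ F^{<p.2}`, and
the modular law computes `E p.1 ⊓ F p.2 ⊓ (E^{<p.1} ⊔ F^{<p.2})`.
-/

section Lattice

variable {α : Type*} [CompleteLattice α]

theorem le_biSup_lt {ι : Type*} [Preorder ι] (f : ι → α) {i j : ι} (h : j < i) :
    f j ≤ ⨆ k < i, f k :=
  le_iSup₂ (f := fun k _ => f k) j h

theorem inf_inf_sup_eq_of_le_of_le [IsModularLattice α] {a b e f : α} (ha : a ≤ e)
    (hb : b ≤ f) : e ⊓ f ⊓ (a ⊔ b) = a ⊓ f ⊔ e ⊓ b := by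
  calc e ⊓ f ⊓ (a ⊔ b) = (a ⊔ e ⊓ b) ⊓ f := by
        rw [inf_right_comm, inf_comm e, sup_inf_assoc_of_le b ha, inf_comm b]
    _ = a ⊓ f ⊔ e ⊓ b := by
        rw [sup_comm, sup_inf_assoc_of_le a (inf_le_right.trans hb), sup_comm]

theorem Monotone.inf_biSup_lt_eq [IsCompactlyGenerated α] {ι : Type*} [LinearOrder ι]
    {F : ι → α} (hF : Monotone F) (a : α) (i : ι) :
    a ⊓ ⨆ j < i, F j = ⨆ j < i, a ⊓ F j := by
  have hdir : Directed (· ≤ ·) fun j : {j // j < i} => F j :=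
    (hF.comp fun _ _ h => Subtype.coe_le_coe.2 h).directed_le
  simpa only [iSup_subtype'] using hdir.inf_iSup_eq

variable {I J : Type*} [LinearOrder I] [LinearOrder J] {E : I → α} {F : J → α}

theorem inf_le_biSup_lt_sup_biSup_lt {p q : I × J} (hpq : ¬p ≤ q) :
    E q.1 ⊓ F q.2 ≤ (⨆ i < p.1, E i) ⊔ ⨆ j < p.2, F j := by
  rcases not_and_or.1 (Prod.le_def.not.1 hpq) with hi | hj
  · exact le_sup_of_le_left (inf_le_left.trans (le_biSup_lt E (not_le.1 hi)))
  · exact le_sup_of_le_right (inf_le_right.trans (le_biSup_lt F (not_le.1 hj)))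

variable [IsCompactlyGenerated α]

theorem biSup_lt_prod_inf_eq (hE : Monotone E) (hF : Monotone F) (i : I) (j : J) :
    ⨆ p < (i, j), E p.1 ⊓ F p.2 = E i ⊓ (⨆ j' < j, F j') ⊔ (⨆ i' < i, E i') ⊓ F j := by
  apply le_antisymm
  · refine iSup₂_le fun p hp => ?_
    rcases hp.le.2.lt_or_eq with hj | hj
    · exact le_sup_of_le_left (inf_le_inf (hE hp.le.1) (le_biSup_lt F hj))
    · have hi : p.1 < i := hp.le.1.lt_of_ne fun hi => hp.ne (Prod.ext hi hj)
      exact le_sup_of_le_right (inf_le_inf (le_biSup_lt E hi) (hF hj.le))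
  · rw [hF.inf_biSup_lt_eq, inf_comm, hE.inf_biSup_lt_eq]
    refine sup_le (iSup₂_le fun j' hj' => ?_) (iSup₂_le fun i' hi' => ?_)
    · exact le_biSup_lt (fun p => E p.1 ⊓ F p.2) (Prod.mk_lt_mk_iff_right.2 hj')
    · rw [inf_comm]
      exact le_biSup_lt (fun p => E p.1 ⊓ F p.2) (Prod.mk_lt_mk_iff_left.2 hi')

theorem inf_inf_biSup_not_le_le [IsModularLattice α] (hE : Monotone E) (hF : Monotone F)
    (p : I × J) :
    E p.1 ⊓ F p.2 ⊓ (⨆ q, ⨆ (_ : ¬p ≤ q), E q.1 ⊓ F q.2) ≤ ⨆ q < p, E q.1 ⊓ F q.2 := by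
  have hE' : ⨆ i < p.1, E i ≤ E p.1 := iSup₂_le fun _ hi => hE hi.le
  have hF' : ⨆ j < p.2, F j ≤ F p.2 := iSup₂_le fun _ hj => hF hj.le
  calc E p.1 ⊓ F p.2 ⊓ (⨆ q, ⨆ (_ : ¬p ≤ q), E q.1 ⊓ F q.2)
      ≤ E p.1 ⊓ F p.2 ⊓ ((⨆ i < p.1, E i) ⊔ ⨆ j < p.2, F j) :=
        inf_le_inf_left _ (iSup₂_le fun _ => inf_le_biSup_lt_sup_biSup_lt)
    _ = ⨆ q < p, E q.1 ⊓ F q.2 := by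
        rw [inf_inf_sup_eq_of_le_of_le hE' hF', sup_comm, biSup_lt_prod_inf_eq hE hF]

end Lattice

/-- Let `R` be a ring, `M` an `R`-module, and `(E, I)`, `(F, J)` linear
filtrations of `M` (order-preserving maps from totally ordered sets into `Submodule R M`).
Then for each `(i,j) ∈ I × J`,
`(E ∩ F)^{<(i,j)} = (E i ⊓ F^{<j}) + (E^{<i} ⊓ F j)`,
and the intersection filtration `(E ∩ F, I × J)`, given by `(E ∩ F)^{(i,j)} = E i ⊓ F j`
on the product order, is distributive: for every finite `Q ⊆ I × J` and every `p` maximal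
in `Q`, `(E ∩ F)^p ⊓ Σ_{q ∈ Q \ {p}} (E ∩ F)^q ⊆ (E ∩ F)^{<p}`. -/
theorem stmt14
    {R : Type*} [Ring R] {M : Type*} [AddCommGroup M] [Module R M]
    {I : Type*} [LinearOrder I] {J : Type*} [LinearOrder J]
    (E : I → Submodule R M) (hE : Monotone E)
    (F : J → Submodule R M) (hF : Monotone F) :
    (∀ i : I, ∀ j : J,
      (⨆ p : I × J, ⨆ (_ : p < (i, j)), E p.1 ⊓ F p.2) =
        (E i ⊓ ⨆ j' : J, ⨆ (_ : j' < j), F j') ⊔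
          ((⨆ i' : I, ⨆ (_ : i' < i), E i') ⊓ F j)) ∧
    (∀ Q : Finset (I × J), ∀ p ∈ Q, (∀ q ∈ Q, p ≤ q → q = p) →
      (E p.1 ⊓ F p.2) ⊓ (⨆ q ∈ Q, ⨆ (_ : q ≠ p), E q.1 ⊓ F q.2) ≤
        ⨆ q : I × J, ⨆ (_ : q < p), E q.1 ⊓ F q.2) := by
  refine ⟨biSup_lt_prod_inf_eq hE hF, fun Q p _ hmax => ?_⟩
  have hQ : ⨆ q ∈ Q, ⨆ (_ : q ≠ p), E q.1 ⊓ F q.2 ≤ ⨆ q, ⨆ (_ : ¬p ≤ q), E q.1 ⊓ F q.2 :=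
    iSup₂_le fun q hq => iSup_le fun hne =>
      le_iSup₂_of_le (f := fun q (_ : ¬p ≤ q) => E q.1 ⊓ F q.2) q
        (fun hpq => hne (hmax q hq hpq)) le_rfl
  exact (inf_le_inf_left _ hQ).trans (inf_inf_biSup_not_le_le hE hF p)
end

section
/- Let R be a ring, M an R-module, and φ : (E, P) → (F, Q) a morphism of poset filtrations of M which is an order-embedding. If (F, Q) is distributive and for all p ∈ P we have F^{<φ(p)} ⊆ E^{<p}, then (E, P) is distributive. -/
/-! Apply distributivity of `(F, Q)` to the image `φ(S)`: `φ p` is maximal there because `φ`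
reflects the order, and injectivity makes the sum over `S ∖ {p}` part of the sum over
`φ(S) ∖ {φ p}`. The hypothesis `F^{<φ(p)} ⊆ E^{<p}` then brings the bound back to `P`. -/

theorem Finset.image_maximal_of_le_reflecting {P Q : Type*} [PartialOrder P] [PartialOrder Q]
    [DecidableEq Q] {φ : P → Q}
    (hφrefl : ∀ p p' : P, φ p ≤ φ p' → p ≤ p') {S : Finset P} {p : P}
    (hmax : ∀ p' ∈ S, p ≤ p' → p' = p) :
    ∀ q ∈ S.image φ, φ p ≤ q → q = φ p := by
  rintro _ hq hle
  obtain ⟨p', hp', rfl⟩ := Finset.mem_image.mp hq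
  exact congrArg φ (hmax p' hp' (hφrefl _ _ hle))

theorem Finset.iSup_ne_le_iSup_image_ne {P Q α : Type*} [CompleteLattice α] [DecidableEq Q]
    {φ : P → Q} {E : P → α} {F : Q → α} (hφinj : Function.Injective φ)
    (hφcomp : ∀ p, F (φ p) = E p)
    (S : Finset P) (p : P) :
    ⨆ p' ∈ S, ⨆ (_ : p' ≠ p), E p' ≤ ⨆ q ∈ S.image φ, ⨆ (_ : q ≠ φ p), F q :=
  iSup₂_le fun p' hp' => iSup_le fun hne => by
    rw [← hφcomp]
    exact le_iSup₂_of_le (φ p') (Finset.mem_image_of_mem φ hp')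
      (le_iSup_of_le (hφinj.ne hne) le_rfl)

theorem stmt15_general
    {R : Type*} [Ring R] {M : Type*} [AddCommGroup M] [Module R M]
    {P : Type*} [PartialOrder P] {Q : Type*} [PartialOrder Q]
    (E : P → Submodule R M)
    (F : Q → Submodule R M)
    (φ : P → Q) (hφinj : Function.Injective φ)
    (hφrefl : ∀ p p' : P, φ p ≤ φ p' → p ≤ p')
    (hφcomp : ∀ p : P, F (φ p) = E p)
    (hFdist : ∀ S : Finset Q, ∀ q ∈ S, (∀ q' ∈ S, q ≤ q' → q' = q) →
      F q ⊓ (⨆ q' ∈ S, ⨆ (_ : q' ≠ q), F q') ≤ ⨆ q' : Q, ⨆ (_ : q' < q), F q')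
    (hlt : ∀ p : P, (⨆ q : Q, ⨆ (_ : q < φ p), F q) ≤ ⨆ p' : P, ⨆ (_ : p' < p), E p') :
    ∀ S : Finset P, ∀ p ∈ S, (∀ p' ∈ S, p ≤ p' → p' = p) →
      E p ⊓ (⨆ p' ∈ S, ⨆ (_ : p' ≠ p), E p') ≤ ⨆ p' : P, ⨆ (_ : p' < p), E p' := by
  classical
  intro S p hpS hmax
  calc E p ⊓ (⨆ p' ∈ S, ⨆ (_ : p' ≠ p), E p')
      ≤ F (φ p) ⊓ ⨆ q ∈ S.image φ, ⨆ (_ : q ≠ φ p), F q :=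
        inf_le_inf (hφcomp p).ge (S.iSup_ne_le_iSup_image_ne hφinj hφcomp p)
    _ ≤ ⨆ q : Q, ⨆ (_ : q < φ p), F q :=
        hFdist _ _ (Finset.mem_image_of_mem φ hpS)
          (Finset.image_maximal_of_le_reflecting hφrefl hmax)
    _ ≤ ⨆ p' : P, ⨆ (_ : p' < p), E p' := hlt p

/-- Let `R` be a ring, `M` an `R`-module, and `φ : (E, P) → (F, Q)` a
morphism of poset filtrations of `M` (i.e. `φ : P → Q` is order-preserving and `F ∘ φ = E`)
which is an order-embedding (injective and order-reflecting).  If `(F, Q)` is distributive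
and for all `p ∈ P` we have `F^{<φ(p)} ⊆ E^{<p}`, then `(E, P)` is distributive.

Distributivity of a poset filtration `(G, P)`: for every finite `S ⊆ P` and every `p`
maximal in `S`, `G p ⊓ Σ_{q ∈ S \ {p}} G q ⊆ G^{<p}`, where `G^{<p} = Σ_{q < p} G q`. -/
theorem stmt15
    {R : Type*} [Ring R] {M : Type*} [AddCommGroup M] [Module R M]
    {P : Type*} [PartialOrder P] {Q : Type*} [PartialOrder Q]
    (E : P → Submodule R M) (hE : Monotone E)
    (F : Q → Submodule R M) (hF : Monotone F)
    (φ : P → Q) (hφmono : Monotone φ) (hφinj : Function.Injective φ)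
    (hφrefl : ∀ p p' : P, φ p ≤ φ p' → p ≤ p')
    (hφcomp : ∀ p : P, F (φ p) = E p)
    (hFdist : ∀ S : Finset Q, ∀ q ∈ S, (∀ q' ∈ S, q ≤ q' → q' = q) →
      F q ⊓ (⨆ q' ∈ S, ⨆ (_ : q' ≠ q), F q') ≤ ⨆ q' : Q, ⨆ (_ : q' < q), F q')
    (hlt : ∀ p : P, (⨆ q : Q, ⨆ (_ : q < φ p), F q) ≤ ⨆ p' : P, ⨆ (_ : p' < p), E p') :
    ∀ S : Finset P, ∀ p ∈ S, (∀ p' ∈ S, p ≤ p' → p' = p) →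
      E p ⊓ (⨆ p' ∈ S, ⨆ (_ : p' ≠ p), E p') ≤ ⨆ p' : P, ⨆ (_ : p' < p), E p' :=
  stmt15_general E F φ hφinj hφrefl hφcomp hFdist hlt
end
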